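/- arXiv:1207.2238 — 4 statements merged into one kernel-verified Lean document; each statement's English description precedes it below -/
import Mathlib

section
/- Let ψ : [0,∞) → [0,∞) be measurable with W(x) − W_ψ(x) = o(ℓ(x)) as x → ∞, where W_ψ(x) := ∫₀ˣ du/w(u + ψ(u)). Then for any positive functions f, g tending to +∞ at infinity, if |W(f(x)) − W_ψ(g(x))| is bounded on [0,∞), then f(x)/g(x) → 1 as x → ∞. -/
/-!
Let `W` be a primitive of `1 / w` with `w x = x / ℓ x`. Since `w` is non-decreasing, for `c > 1`
both `W (c x) - W x` and `W x - W (x / c)` are at least `(1 - c⁻¹)` times `ℓ (c x)`, respectively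
`ℓ x`, and `ℓ (c x) ~ ℓ x → ∞`. On the other hand `W (f x) - Wψ (g x) = O(1)` and
`W - Wψ = o(ℓ)` give `W (f x) - W (g x) = o(ℓ (g x))`, so eventually neither `f x > c g x`
nor `g x > c f x`.
-/

open Filter Asymptotics

theorem tendsto_nhds_one_of_forall_eventually_inv_le_le {α : Type*} {l : Filter α} {u : α → ℝ}
    (h : ∀ c > 1, ∀ᶠ x in l, c⁻¹ ≤ u x ∧ u x ≤ c) : Tendsto u l (nhds 1) := by
  refine tendsto_order.2 ⟨fun a ha => ?_, fun b hb => ?_⟩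
  · -- `a < (2 - a)⁻¹` because `a (2 - a) = 1 - (1 - a)² < 1`
    have hinv : a < (2 - a)⁻¹ := by
      rw [← one_div, lt_div_iff₀ (by linarith)]
      nlinarith [sq_pos_of_pos (sub_pos.2 ha)]
    exact (h (2 - a) (by linarith)).mono fun x hx => hinv.trans_le hx.1
  · exact (h ((1 + b) / 2) (by linarith)).mono fun x hx => hx.2.trans_lt (by linarith)

theorem isLittleO_sub_of_abs_sub_le_of_tendsto_div {α : Type*} {l : Filter α}
    {A B D L : α → ℝ} {C : ℝ} (hAB : ∀ᶠ x in l, |A x - B x| ≤ C)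
    (hDB : Tendsto (fun x => (D x - B x) / L x) l (nhds 0)) (hL : Tendsto L l atTop) :
    (fun x => A x - D x) =o[l] L := by
  have hAB' : (fun x => A x - B x) =O[l] fun _ => (1 : ℝ) :=
    IsBigO.of_bound C (hAB.mono fun x hx => by simpa using hx)
  have hone : (fun _ => (1 : ℝ)) =o[l] L :=
    (isLittleO_one_left_iff ℝ).2 (tendsto_norm_atTop_atTop.comp hL)
  have hDB' : (fun x => D x - B x) =o[l] L :=
    (isLittleO_iff_tendsto' ((hL.eventually_gt_atTop 0).mono fun x hx h0 =>
      absurd h0 hx.ne')).2 hDB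
  simpa using (hAB'.trans_isLittleO hone).sub hDB'

section Increments

variable {w W : ℝ → ℝ}

theorem intervalIntegrable_one_div_of_monotoneOn (hw_pos : ∀ x, 0 ≤ x → 0 < w x)
    (hw_mono : MonotoneOn w (Set.Ici 0)) {a b : ℝ} (ha : 0 ≤ a) (hb : 0 ≤ b) :
    IntervalIntegrable (fun u => 1 / w u) MeasureTheory.volume a b := by
  have hsub : Set.uIcc a b ⊆ Set.Ici 0 := fun _ hu => (le_min ha hb).trans hu.1
  refine AntitoneOn.intervalIntegrable fun x hx y hy hxy => ?_
  exact one_div_le_one_div_of_le (hw_pos x (hsub hx)) (hw_mono (hsub hx) (hsub hy) hxy)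

theorem sub_div_le_sub_of_monotoneOn (hw_pos : ∀ x, 0 ≤ x → 0 < w x)
    (hw_mono : MonotoneOn w (Set.Ici 0)) (hW : ∀ x, W x = ∫ u in (0:ℝ)..x, 1 / w u)
    {a b : ℝ} (ha : 0 ≤ a) (hab : a ≤ b) : (b - a) / w b ≤ W b - W a := by
  have hb : 0 ≤ b := ha.trans hab
  rw [hW, hW, intervalIntegral.integral_interval_sub_left
    (intervalIntegrable_one_div_of_monotoneOn hw_pos hw_mono le_rfl hb)
    (intervalIntegrable_one_div_of_monotoneOn hw_pos hw_mono le_rfl ha)]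
  calc (b - a) / w b = ∫ _ in a..b, 1 / w b := by
        rw [intervalIntegral.integral_const, smul_eq_mul, mul_one_div]
    _ ≤ ∫ u in a..b, 1 / w u := by
      refine intervalIntegral.integral_mono_on hab intervalIntegrable_const
        (intervalIntegrable_one_div_of_monotoneOn hw_pos hw_mono ha hb) fun u hu => ?_
      exact one_div_le_one_div_of_le (hw_pos u (ha.trans hu.1)) (hw_mono (ha.trans hu.1) hb hu.2)

theorem monotoneOn_of_eq_integral_one_div (hw_pos : ∀ x, 0 ≤ x → 0 < w x)
    (hw_mono : MonotoneOn w (Set.Ici 0)) (hW : ∀ x, W x = ∫ u in (0:ℝ)..x, 1 / w u) :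
    MonotoneOn W (Set.Ici 0) := fun _ ha b hb hab =>
  sub_nonneg.1 <| (div_nonneg (sub_nonneg.2 hab) (hw_pos b hb).le).trans
    (sub_div_le_sub_of_monotoneOn hw_pos hw_mono hW ha hab)

theorem one_sub_inv_mul_le_sub_mul {ℓ : ℝ → ℝ} (hw_pos : ∀ x, 0 ≤ x → 0 < w x)
    (hw_mono : MonotoneOn w (Set.Ici 0)) (hwl : ∀ x, 0 < x → w x = x / ℓ x)
    (hW : ∀ x, W x = ∫ u in (0:ℝ)..x, 1 / w u) {x c : ℝ} (hx : 0 < x) (hc : 1 ≤ c) :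
    (1 - c⁻¹) * ℓ (c * x) ≤ W (c * x) - W x := by
  have hcx : 0 < c * x := by positivity
  have hc0 : c ≠ 0 := by positivity
  calc (1 - c⁻¹) * ℓ (c * x) = (c * x - x) / w (c * x) := by
        rw [hwl _ hcx, div_div_eq_mul_div]
        field_simp
    _ ≤ W (c * x) - W x :=
      sub_div_le_sub_of_monotoneOn hw_pos hw_mono hW hx.le (le_mul_of_one_le_left hx.le hc)

end Increments

section Comparison

variable {α : Type*} {l : Filter α} {V L : ℝ → ℝ} {F G : α → ℝ}

theorem eventually_le_mul_of_isLittleO_sub (hV_mono : MonotoneOn V (Set.Ici 0))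
    (hV_growth : ∀ x c, 0 < x → 1 ≤ c → (1 - c⁻¹) * L (c * x) ≤ V (c * x) - V x)
    {c : ℝ} (hc : 1 < c) (hL_slow : Tendsto (fun x => L (c * x) / L x) atTop (nhds 1))
    (hL : Tendsto L atTop atTop) (hG : Tendsto G l atTop)
    (hVFG : (fun x => V (F x) - V (G x)) =o[l] fun x => L (G x)) :
    ∀ᶠ x in l, F x ≤ c * G x := by
  have hκ : 0 < 1 - c⁻¹ := sub_pos.2 (inv_lt_one_of_one_lt₀ hc)
  filter_upwards [(hL_slow.comp hG).eventually (eventually_ge_nhds (by norm_num : (1 : ℝ) / 2 < 1)),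
    (hL.comp hG).eventually_gt_atTop 0, hG.eventually_gt_atTop 0,
    hVFG.bound (by positivity : 0 < (1 - c⁻¹) / 4)] with x hslow hLpos hGpos hbound
  by_contra! hFG
  rw [Function.comp_apply] at hLpos
  rw [Real.norm_eq_abs, Real.norm_eq_abs, abs_of_pos hLpos] at hbound
  have hcG : 0 ≤ c * G x := by positivity
  have hVF : V (c * G x) ≤ V (F x) := hV_mono hcG (hcG.trans hFG.le) hFG.le
  have hincr := hV_growth (G x) c hGpos hc.le
  have hLc : L (G x) / 2 ≤ L (c * G x) := by
    rw [Function.comp_apply, le_div_iff₀ hLpos] at hslow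
    linarith
  have hκLc := mul_le_mul_of_nonneg_left hLc hκ.le
  linarith [le_abs_self (V (F x) - V (G x)), mul_pos hκ hLpos]

theorem eventually_div_le_of_isLittleO_sub (hV_mono : MonotoneOn V (Set.Ici 0))
    (hV_growth : ∀ x c, 0 < x → 1 ≤ c → (1 - c⁻¹) * L (c * x) ≤ V (c * x) - V x)
    {c : ℝ} (hc : 1 < c) (hL : Tendsto L atTop atTop) (hF : ∀ᶠ x in l, 0 ≤ F x)
    (hG : Tendsto G l atTop) (hVFG : (fun x => V (F x) - V (G x)) =o[l] fun x => L (G x)) :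
    ∀ᶠ x in l, G x / c ≤ F x := by
  have hκ : 0 < 1 - c⁻¹ := sub_pos.2 (inv_lt_one_of_one_lt₀ hc)
  filter_upwards [hF, (hL.comp hG).eventually_gt_atTop 0, hG.eventually_gt_atTop 0,
    hVFG.bound (by positivity : 0 < (1 - c⁻¹) / 2)] with x hF hLpos hGpos hbound
  by_contra! hFG
  rw [Function.comp_apply] at hLpos
  rw [Real.norm_eq_abs, Real.norm_eq_abs, abs_of_pos hLpos] at hbound
  have hVF : V (F x) ≤ V (G x / c) := hV_mono hF (hF.trans hFG.le) hFG.le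
  have hincr := hV_growth (G x / c) c (by positivity) hc.le
  rw [mul_div_cancel₀ _ (by positivity)] at hincr
  linarith [neg_abs_le (V (F x) - V (G x)), mul_pos hκ hLpos]

theorem tendsto_div_nhds_one_of_isLittleO_sub (hV_mono : MonotoneOn V (Set.Ici 0))
    (hV_growth : ∀ x c, 0 < x → 1 ≤ c → (1 - c⁻¹) * L (c * x) ≤ V (c * x) - V x)
    (hL_slow : ∀ c, 0 < c → Tendsto (fun x => L (c * x) / L x) atTop (nhds 1))
    (hL : Tendsto L atTop atTop) (hF : ∀ᶠ x in l, 0 ≤ F x) (hG : Tendsto G l atTop)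
    (hVFG : (fun x => V (F x) - V (G x)) =o[l] fun x => L (G x)) :
    Tendsto (fun x => F x / G x) l (nhds 1) :=
  tendsto_nhds_one_of_forall_eventually_inv_le_le fun c hc => by
    filter_upwards [eventually_div_le_of_isLittleO_sub hV_mono hV_growth hc hL hF hG hVFG,
      eventually_le_mul_of_isLittleO_sub hV_mono hV_growth hc (hL_slow c (by linarith)) hL hG hVFG,
      hG.eventually_gt_atTop 0] with x hlow hup hGpos
    exact ⟨(le_div_iff₀ hGpos).2 (by rwa [inv_mul_eq_div]), (div_le_iff₀ hGpos).2 hup⟩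

end Comparison

theorem bdd_W_Wpsi_diff_implies_ratio_tendsto_one_general
(w ℓ W : ℝ → ℝ)
    (hw_pos : ∀ x, 0 ≤ x → 0 < w x)
    (hw_mono : MonotoneOn w (Set.Ici 0))
    (hwl : ∀ x, 0 < x → w x = x / ℓ x)
    (hl_slow : ∀ c, 0 < c → Tendsto (fun x => ℓ (c * x) / ℓ x) atTop (nhds 1))
    (hl_inf : Tendsto ℓ atTop atTop)
    (hW : ∀ x, W x = ∫ u in (0:ℝ)..x, 1 / w u)
    (Wψ : ℝ → ℝ)
    (hsmall : Tendsto (fun x => (W x - Wψ x) / ℓ x) atTop (nhds 0))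
    (f g : ℝ → ℝ)
    (hf_pos : ∀ x, 0 ≤ x → 0 < f x)
    (hg_inf : Tendsto g atTop atTop)
    (hbdd : ∃ C : ℝ, ∀ x, 0 ≤ x → |W (f x) - Wψ (g x)| ≤ C) :
    Tendsto (fun x => f x / g x) atTop (nhds 1) := by
  obtain ⟨C, hC⟩ := hbdd
  have hfg : (fun x => W (f x) - W (g x)) =o[atTop] fun x => ℓ (g x) :=
    isLittleO_sub_of_abs_sub_le_of_tendsto_div (B := fun x => Wψ (g x))
      ((eventually_ge_atTop 0).mono hC) (hsmall.comp hg_inf) (hl_inf.comp hg_inf)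
  exact tendsto_div_nhds_one_of_isLittleO_sub (monotoneOn_of_eq_integral_one_div hw_pos hw_mono hW)
    (fun _ _ hx hc => one_sub_inv_mul_le_sub_mul hw_pos hw_mono hwl hW hx hc) hl_slow hl_inf
    ((eventually_ge_atTop 0).mono fun x hx => (hf_pos x hx).le) hg_inf hfg

/-- If `ψ ≥ 0` is measurable with `W(x) − W_ψ(x) = o(ℓ(x))`, where
`W_ψ(x) = ∫₀ˣ du / w(u + ψ(u))`, then for positive `f, g` tending to `+∞`,
boundedness of `|W(f(x)) − W_ψ(g(x))|` on `[0,∞)` implies `f(x)/g(x) → 1`. -/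
theorem bdd_W_Wpsi_diff_implies_ratio_tendsto_one
(w ℓ W : ℝ → ℝ)
    (hw_cont : ContinuousOn w (Set.Ici 0))
    (hw_pos : ∀ x, 0 ≤ x → 0 < w x)
    (hw_mono : MonotoneOn w (Set.Ici 0))
    (hwl : ∀ x, 0 < x → w x = x / ℓ x)
    (hl_slow : ∀ c, 0 < c → Tendsto (fun x => ℓ (c * x) / ℓ x) atTop (nhds 1))
    (hl_inf : Tendsto ℓ atTop atTop)
    (hW : ∀ x, W x = ∫ u in (0:ℝ)..x, 1 / w u)
    (ψ Wψ : ℝ → ℝ)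
    (hψ_meas : Measurable ψ)
    (hψ_nonneg : ∀ x, 0 ≤ x → 0 ≤ ψ x)
    (hWψ : ∀ x, Wψ x = ∫ u in (0:ℝ)..x, 1 / w (u + ψ u))
    (hsmall : Tendsto (fun x => (W x - Wψ x) / ℓ x) atTop (nhds 0))
    (f g : ℝ → ℝ)
    (hf_pos : ∀ x, 0 ≤ x → 0 < f x) (hg_pos : ∀ x, 0 ≤ x → 0 < g x)
    (hf_inf : Tendsto f atTop atTop) (hg_inf : Tendsto g atTop atTop)
    (hbdd : ∃ C : ℝ, ∀ x, 0 ≤ x → |W (f x) - Wψ (g x)| ≤ C) :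
    Tendsto (fun x => f x / g x) atTop (nhds 1) :=
  bdd_W_Wpsi_diff_implies_ratio_tendsto_one_general w ℓ W hw_pos hw_mono hwl hl_slow hl_inf hW Wψ
    hsmall f g hf_pos hg_inf hbdd
end

section
/- For 0 < η < 1, the function Φ_{η,2}(x) := W^{-1}(η·W(x/η)) satisfies Φ_{η,2}(x) = o(x) as x → ∞. -/
/-!
Since `w` is non-decreasing, `W y - W z ≤ (y - z) / w z` for `z ≤ y`; for `z = ε y` the right side
is `(1 - ε) / ε * ℓ (ε y)`. On the other hand `W z - W (z / 2) ≥ ℓ z / 2`, and since `ℓ (z / 2) ~ ℓ z`,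
iterating this gives `W z / ℓ z → ∞`. Hence `η W y ≤ W (ε y)` for large `y`, i.e.
`W⁻¹ (η W y) ≤ ε y`, for every `ε > 0`.
-/

open Filter MeasureTheory Set Topology

section AntitoneIntegral

variable {g : ℝ → ℝ} {a b : ℝ}

theorem AntitoneOn.sub_mul_le_integral (hg : AntitoneOn g (Icc a b)) (hab : a ≤ b) :
    (b - a) * g b ≤ ∫ u in a..b, g u := by
  have hint : IntervalIntegrable g volume a b :=
    (hg.mono (by simp [uIcc_of_le hab])).intervalIntegrable
  calc (b - a) * g b = ∫ _ in a..b, g b := by simp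
    _ ≤ ∫ u in a..b, g u := intervalIntegral.integral_mono_on hab intervalIntegrable_const hint
        fun u hu => hg hu ⟨hab, le_rfl⟩ hu.2

theorem AntitoneOn.integral_le_sub_mul (hg : AntitoneOn g (Icc a b)) (hab : a ≤ b) :
    ∫ u in a..b, g u ≤ (b - a) * g a := by
  have hint : IntervalIntegrable g volume a b :=
    (hg.mono (by simp [uIcc_of_le hab])).intervalIntegrable
  calc ∫ u in a..b, g u ≤ ∫ _ in a..b, g a :=
        intervalIntegral.integral_mono_on hab hint intervalIntegrable_const
          fun u hu => hg ⟨le_rfl, hab⟩ hu hu.1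
    _ = (b - a) * g a := by simp

end AntitoneIntegral

theorem tendsto_div_atTop_of_add_half_le {F L : ℝ → ℝ} (hF : ∀ᶠ z in atTop, 0 ≤ F z)
    (hL : ∀ᶠ z in atTop, 0 < L z) (hslow : Tendsto (fun z => L (z / 2) / L z) atTop (𝓝 1))
    (hstep : ∀ᶠ z in atTop, F (z / 2) + L z / 2 ≤ F z) :
    Tendsto (fun z => F z / L z) atTop atTop := by
  have hhalf : Tendsto (fun z : ℝ => z / 2) atTop atTop := tendsto_id.atTop_div_const two_pos
  have hlinear : ∀ n : ℕ, ∀ᶠ z in atTop, n / 4 * L z ≤ F z := by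
    intro n
    induction n with
    | zero => simpa using hF
    | succ n ih =>
      have hratio : ∀ᶠ z in atTop, n / (n + 1) ≤ L (z / 2) / L z :=
        hslow.eventually (eventually_ge_nhds (by rw [div_lt_one (by positivity)]; linarith))
      filter_upwards [hhalf.eventually ih, hratio, hL, hstep] with z hprev hz hLz hFz
      rw [le_div_iff₀ hLz] at hz
      have hq : (n : ℝ) / (n + 1) * (n + 1) = n := div_mul_cancel₀ _ (by positivity)
      have hq1 : (n : ℝ) / (n + 1) ≤ 1 := div_le_one_of_le₀ (by linarith) (by positivity)
      push_cast
      nlinarith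
  refine tendsto_atTop.2 fun K => ?_
  obtain ⟨n, hn⟩ := exists_nat_ge (4 * K)
  filter_upwards [hlinear n, hL] with z hz hLz
  rw [le_div_iff₀ hLz]
  nlinarith

theorem Set.LeftInvOn.mem_Icc_of_mem_Icc {α δ : Type*} [ConditionallyCompleteLinearOrder α]
    [TopologicalSpace α] [OrderTopology α] [DenselyOrdered α] [LinearOrder δ] [TopologicalSpace δ]
    [OrderClosedTopology δ] {W : α → δ} {Winv : δ → α} {a b : α} {v : δ}
    (hinv : LeftInvOn Winv W (Icc a b)) (hab : a ≤ b) (hW : ContinuousOn W (Icc a b))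
    (hv : v ∈ Icc (W a) (W b)) : Winv v ∈ Icc a b := by
  obtain ⟨t, ht, rfl⟩ := intermediate_value_Icc hab hW hv
  rwa [hinv ht]

section Primitive

variable {g W : ℝ → ℝ}

theorem primitive_sub_eq_integral (hg : AntitoneOn g (Ici 0))
    (hW : ∀ x, W x = ∫ u in (0:ℝ)..x, g u) {a b : ℝ} (ha : 0 ≤ a) (hb : 0 ≤ b) :
    W b - W a = ∫ u in a..b, g u := by
  have hint : ∀ c, 0 ≤ c → IntervalIntegrable g volume 0 c := fun c hc =>
    (hg.mono (by simp [uIcc_of_le hc, Icc_subset_Ici_self])).intervalIntegrable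
  rw [hW, hW, intervalIntegral.integral_interval_sub_left (hint b hb) (hint a ha)]

theorem sub_mul_le_primitive_sub (hg : AntitoneOn g (Ici 0))
    (hW : ∀ x, W x = ∫ u in (0:ℝ)..x, g u) {a b : ℝ} (ha : 0 ≤ a) (hab : a ≤ b) :
    (b - a) * g b ≤ W b - W a := by
  rw [primitive_sub_eq_integral hg hW ha (ha.trans hab)]
  exact (hg.mono fun u hu => ha.trans hu.1).sub_mul_le_integral hab

theorem primitive_sub_le_sub_mul (hg : AntitoneOn g (Ici 0))
    (hW : ∀ x, W x = ∫ u in (0:ℝ)..x, g u) {a b : ℝ} (ha : 0 ≤ a) (hab : a ≤ b) :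
    W b - W a ≤ (b - a) * g a := by
  rw [primitive_sub_eq_integral hg hW ha (ha.trans hab)]
  exact (hg.mono fun u hu => ha.trans hu.1).integral_le_sub_mul hab

theorem primitive_nonneg (hg : AntitoneOn g (Ici 0)) (hg_nonneg : ∀ x, 0 ≤ x → 0 ≤ g x)
    (hW : ∀ x, W x = ∫ u in (0:ℝ)..x, g u) {x : ℝ} (hx : 0 ≤ x) : 0 ≤ W x := by
  have h := sub_mul_le_primitive_sub hg hW le_rfl hx
  rw [hW 0, intervalIntegral.integral_same] at h
  nlinarith [hg_nonneg x hx]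

theorem continuousOn_primitive (hg : AntitoneOn g (Ici 0))
    (hW : ∀ x, W x = ∫ u in (0:ℝ)..x, g u) {b : ℝ} (hb : 0 ≤ b) : ContinuousOn W (Icc 0 b) := by
  have hint : IntegrableOn g (uIcc 0 b) volume :=
    (hg.mono (by simp [uIcc_of_le hb, Icc_subset_Ici_self])).integrableOn_isCompact isCompact_uIcc
  have h := intervalIntegral.continuousOn_primitive_interval hint
  rw [uIcc_of_le hb] at h
  exact h.congr fun x _ => hW x

theorem tendsto_primitive_div_atTop {ℓ : ℝ → ℝ} (hg : AntitoneOn g (Ici 0))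
    (hg_pos : ∀ x, 0 ≤ x → 0 < g x) (hW : ∀ x, W x = ∫ u in (0:ℝ)..x, g u)
    (hgℓ : ∀ z, 0 < z → z * g z = ℓ z) (hslow : Tendsto (fun z => ℓ (z / 2) / ℓ z) atTop (𝓝 1)) :
    Tendsto (fun z => W z / ℓ z) atTop atTop := by
  refine tendsto_div_atTop_of_add_half_le ?_ ?_ hslow ?_
  · filter_upwards [eventually_ge_atTop 0] with z hz
    exact primitive_nonneg hg (fun x hx => (hg_pos x hx).le) hW hz
  · filter_upwards [eventually_gt_atTop 0] with z hz
    rw [← hgℓ z hz]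
    exact mul_pos hz (hg_pos z hz.le)
  · filter_upwards [eventually_gt_atTop 0] with z hz
    have h := sub_mul_le_primitive_sub hg hW (a := z / 2) (b := z) (by positivity) (by linarith)
    rw [← hgℓ z hz]
    linarith

theorem eventually_mul_primitive_le_primitive_mul {ℓ : ℝ → ℝ} (hg : AntitoneOn g (Ici 0))
    (hg_pos : ∀ x, 0 ≤ x → 0 < g x) (hW : ∀ x, W x = ∫ u in (0:ℝ)..x, g u)
    (hgℓ : ∀ z, 0 < z → z * g z = ℓ z) (hgrowth : Tendsto (fun z => W z / ℓ z) atTop atTop)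
    {η ε : ℝ} (hη : 0 < η) (hη1 : η < 1) (hε : 0 < ε) (hε1 : ε < 1) :
    ∀ᶠ y in atTop, η * W y ≤ W (ε * y) := by
  set C := η * (1 - ε) / ((1 - η) * ε) with hC
  filter_upwards [(tendsto_id.const_mul_atTop hε).eventually (hgrowth.eventually_ge_atTop C),
    eventually_gt_atTop 0] with y hCy hy
  have hεy : 0 < ε * y := mul_pos hε hy
  have hupper := primitive_sub_le_sub_mul hg hW hεy.le (by nlinarith)
  have hincrement : η * ((y - ε * y) * g (ε * y)) = (1 - η) * (C * ℓ (ε * y)) := by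
    rw [← hgℓ _ hεy, hC]
    field_simp [(sub_pos.2 hη1).ne']
  rw [id, le_div_iff₀ (hgℓ _ hεy ▸ mul_pos hεy (hg_pos _ hεy.le))] at hCy
  calc η * W y ≤ η * W (ε * y) + η * ((y - ε * y) * g (ε * y)) := by nlinarith
    _ ≤ η * W (ε * y) + (1 - η) * W (ε * y) := by
      rw [hincrement]; gcongr
    _ = W (ε * y) := by ring

theorem eventually_inv_mul_primitive_mem_Icc {Winv : ℝ → ℝ} (hg : AntitoneOn g (Ici 0))
    (hg_nonneg : ∀ x, 0 ≤ x → 0 ≤ g x) (hW : ∀ x, W x = ∫ u in (0:ℝ)..x, g u)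
    (hinv : LeftInvOn Winv W (Ici 0)) {η ε : ℝ} (hη : 0 ≤ η) (hε : 0 < ε)
    (hle : ∀ᶠ y in atTop, η * W y ≤ W (ε * y)) :
    ∀ᶠ y in atTop, Winv (η * W y) ∈ Icc 0 (ε * y) := by
  filter_upwards [hle, eventually_ge_atTop 0] with y hy hy0
  have hW0 : W 0 = 0 := by rw [hW, intervalIntegral.integral_same]
  refine (hinv.mono Icc_subset_Ici_self).mem_Icc_of_mem_Icc (by positivity)
    (continuousOn_primitive hg hW (by positivity)) ⟨?_, hy⟩
  rw [hW0]
  exact mul_nonneg hη (primitive_nonneg hg hg_nonneg hW hy0)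

end Primitive

theorem tendsto_div_nhds_zero_of_eventually_mem_Icc {f : ℝ → ℝ}
    (h : ∀ ε, 0 < ε → ε < 1 → ∀ᶠ y in atTop, f y ∈ Icc 0 (ε * y)) :
    Tendsto (fun y => f y / y) atTop (𝓝 0) := by
  refine tendsto_order.2 ⟨fun a ha => ?_, fun b hb => ?_⟩
  · filter_upwards [h 2⁻¹ (by norm_num) (by norm_num), eventually_gt_atTop 0] with y hy hy0
    exact ha.trans_le (div_nonneg hy.1 hy0.le)
  · obtain ⟨ε, hε, hε1, hεb⟩ : ∃ ε, 0 < ε ∧ ε < 1 ∧ ε < b :=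
      ⟨min (b / 2) 2⁻¹, by positivity, min_lt_of_right_lt (by norm_num),
        min_lt_of_left_lt (by linarith)⟩
    filter_upwards [h ε hε hε1, eventually_gt_atTop 0] with y hy hy0
    exact ((div_le_iff₀ hy0).2 hy.2).trans_lt hεb

theorem Phi_eta_two_littleO_id_general
(w ℓ W : ℝ → ℝ)
    (hw_pos : ∀ x, 0 ≤ x → 0 < w x)
    (hw_mono : MonotoneOn w (Set.Ici 0))
    (hwl : ∀ x, 0 < x → w x = x / ℓ x)
    (hl_slow : ∀ c, 0 < c → Tendsto (fun x => ℓ (c * x) / ℓ x) atTop (nhds 1))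
    (hW : ∀ x, W x = ∫ u in (0:ℝ)..x, 1 / w u)
    (Winv : ℝ → ℝ)
    (hWinv_left : ∀ x, 0 ≤ x → Winv (W x) = x)
    (η : ℝ) (hη : 0 < η) (hη1 : η < 1) :
    Tendsto (fun x => Winv (η * W (x / η)) / x) atTop (nhds 0) := by
  have hg : AntitoneOn (fun u => 1 / w u) (Ici 0) := fun x hx y hy hxy =>
    one_div_le_one_div_of_le (hw_pos x hx) (hw_mono hx hy hxy)
  have hg_pos : ∀ x, 0 ≤ x → 0 < 1 / w x := fun x hx => one_div_pos.2 (hw_pos x hx)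
  have hgℓ : ∀ z, 0 < z → z * (1 / w z) = ℓ z := fun z hz => by
    have hℓ : ℓ z ≠ 0 := fun h => (hw_pos z hz.le).ne' (by rw [hwl z hz, h, div_zero])
    rw [hwl z hz]
    field_simp
  have hslow : Tendsto (fun z => ℓ (z / 2) / ℓ z) atTop (𝓝 1) := by
    simpa only [div_eq_inv_mul] using hl_slow 2⁻¹ (by norm_num)
  have hgrowth := tendsto_primitive_div_atTop hg hg_pos hW hgℓ hslow
  have hΦ : Tendsto (fun y => Winv (η * W y) / y) atTop (𝓝 0) :=
    tendsto_div_nhds_zero_of_eventually_mem_Icc fun ε hε hε1 =>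
      eventually_inv_mul_primitive_mem_Icc hg (fun x hx => (hg_pos x hx).le) hW
        (fun x hx => hWinv_left x hx) hη.le hε
        (eventually_mul_primitive_le_primitive_mul hg hg_pos hW hgℓ hgrowth hη hη1 hε hε1)
  have hΦη := (hΦ.comp (tendsto_id.atTop_div_const hη)).div_const η
  rw [zero_div] at hΦη
  refine hΦη.congr' ?_
  filter_upwards [eventually_gt_atTop 0] with x hx
  simp only [Function.comp_apply, id]
  field_simp

/-- For `0 < η < 1`, `Φ_{η,2}(x) = W⁻¹(η·W(x/η))` satisfies `Φ_{η,2}(x) = o(x)`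
as `x → ∞`. -/
theorem Phi_eta_two_littleO_id
(w ℓ W : ℝ → ℝ)
    (hw_cont : ContinuousOn w (Set.Ici 0))
    (hw_pos : ∀ x, 0 ≤ x → 0 < w x)
    (hw_mono : MonotoneOn w (Set.Ici 0))
    (hwl : ∀ x, 0 < x → w x = x / ℓ x)
    (hl_slow : ∀ c, 0 < c → Tendsto (fun x => ℓ (c * x) / ℓ x) atTop (nhds 1))
    (hl_inf : Tendsto ℓ atTop atTop)
    (hW : ∀ x, W x = ∫ u in (0:ℝ)..x, 1 / w u)
    (Winv : ℝ → ℝ)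
    (hWinv_left : ∀ x, 0 ≤ x → Winv (W x) = x)
    (hWinv_right : ∀ x, 0 ≤ x → W (Winv x) = x)
    (η : ℝ) (hη : 0 < η) (hη1 : η < 1) :
    Tendsto (fun x => Winv (η * W (x / η)) / x) atTop (nhds 0) :=
  Phi_eta_two_littleO_id_general w ℓ W hw_pos hw_mono hwl hl_slow hW Winv hWinv_left η hη hη1
end

section
/- For 0 < η < η' < 1 and any λ > 0, Φ_{η,2}(λx) = o(Φ_{η',2}(x)) as x → ∞, where Φ_{η,2}(x) := W^{-1}(η·W(x/η)). -/
/-!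
`W` is slowly varying. Since `w` is non-decreasing, on the dyadic block `[x/2^(j+1), x/2^j]` the
integrand `1/w` is at least `1/w(x/2^j)`, so the block contributes at least `ℓ(x/2^j)/2`, which
is `≥ ℓ x / 4` for fixed `j` and large `x`; hence `W x / ℓ x → ∞`. On the other hand
`W (c x) - W x ≤ (c - 1) ℓ x` for `c ≥ 1`. Consequently
`W(Φ_{η,2}(λx)) / W(Φ_{η',2}(x)) = η W(λx/η) / (η' W(x/η')) → η / η' < 1`, and for a slowly
varying increasing `W` this forces `Φ_{η,2}(λx) = o(Φ_{η',2}(x))`: for every `ε > 0` the ratio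
`W(ε Φ_{η',2}(x)) / W(Φ_{η',2}(x))` tends to `1`, so eventually
`W(Φ_{η,2}(λx)) < W(ε Φ_{η',2}(x))`.
-/

open Filter MeasureTheory Set Topology

def SlowlyVarying (f : ℝ → ℝ) : Prop :=
  ∀ c, 0 < c → Tendsto (fun x => f (c * x) / f x) atTop (𝓝 1)

namespace SlowlyVarying

variable {f : ℝ → ℝ}

theorem tendsto_comp (hf : SlowlyVarying f) {c : ℝ} (hc : 0 < c) {α : Type*} {l : Filter α}
    {g : α → ℝ} (hg : Tendsto g l atTop) : Tendsto (fun x => f (c * g x) / f (g x)) l (𝓝 1) :=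
  (hf c hc).comp hg

theorem of_one_le (h : ∀ c, 1 ≤ c → Tendsto (fun x => f (c * x) / f x) atTop (𝓝 1)) :
    SlowlyVarying f := by
  intro c hc
  rcases le_or_gt 1 c with hc1 | hc1
  · exact h c hc1
  · have hinv := ((h c⁻¹ ((one_le_inv₀ hc).2 hc1.le)).comp
      (tendsto_id.const_mul_atTop hc)).inv₀ one_ne_zero
    rw [inv_one] at hinv
    refine hinv.congr fun x => ?_
    simp only [Function.comp_apply, id, inv_mul_cancel_left₀ hc.ne', inv_div]

theorem eventually_mul_le (hf : SlowlyVarying f) (hpos : ∀ᶠ x in atTop, 0 < f x) {c r : ℝ}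
    (hc : 0 < c) (hr : r < 1) : ∀ᶠ x in atTop, r * f x ≤ f (c * x) := by
  filter_upwards [(hf c hc).eventually (eventually_ge_nhds hr), hpos] with x hx hfx
  rwa [le_div_iff₀ hfx] at hx

theorem tendsto_div_zero {W : ℝ → ℝ} (hW : SlowlyVarying W) (hmono : StrictMonoOn W (Ici 0))
    (hpos : ∀ x, 0 < x → 0 < W x) {α : Type*} {l : Filter α} {f g : α → ℝ}
    (hf : ∀ᶠ x in l, 0 ≤ f x) (hg : Tendsto g l atTop) {r : ℝ} (hr : r < 1)
    (hfg : Tendsto (fun x => W (f x) / W (g x)) l (𝓝 r)) :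
    Tendsto (fun x => f x / g x) l (𝓝 0) := by
  refine tendsto_order.2 ⟨fun a ha => ?_, fun ε hε => ?_⟩
  · filter_upwards [hf, hg.eventually_gt_atTop 0] with x hfx hgx
    exact ha.trans_le (div_nonneg hfx hgx.le)
  · filter_upwards [hfg.eventually_lt (hW.tendsto_comp hε hg) hr, hf,
      hg.eventually_gt_atTop 0] with x hx hfx hgx
    rw [div_lt_div_iff_of_pos_right (hpos _ hgx)] at hx
    rw [div_lt_iff₀ hgx]
    exact (hmono.lt_iff_lt hfx (by positivity : 0 ≤ ε * g x)).1 hx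

end SlowlyVarying

theorem AntitoneOn.sub_mul_le_intervalIntegral {f : ℝ → ℝ} {a b : ℝ} (hab : a ≤ b)
    (hf : AntitoneOn f (Icc a b)) : (b - a) * f b ≤ ∫ x in a..b, f x := by
  calc (b - a) * f b = ∫ _ in a..b, f b := by simp
    _ ≤ ∫ x in a..b, f x :=
      intervalIntegral.integral_mono_on hab intervalIntegrable_const
        (hf.mono (uIcc_of_le hab).le).intervalIntegrable
        fun x hx => hf hx ⟨hab, le_rfl⟩ hx.2

theorem AntitoneOn.intervalIntegral_le_sub_mul {f : ℝ → ℝ} {a b : ℝ} (hab : a ≤ b)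
    (hf : AntitoneOn f (Icc a b)) : ∫ x in a..b, f x ≤ (b - a) * f a := by
  calc ∫ x in a..b, f x ≤ ∫ _ in a..b, f a :=
      intervalIntegral.integral_mono_on hab (hf.mono (uIcc_of_le hab).le).intervalIntegrable
        intervalIntegrable_const fun x hx => hf ⟨le_rfl, hab⟩ hx hx.1
    _ = (b - a) * f a := by simp

-- The paper's `W`.
noncomputable def recipIntegral (w : ℝ → ℝ) (x : ℝ) : ℝ := ∫ u in (0 : ℝ)..x, 1 / w u

section recipIntegral

variable {w : ℝ → ℝ}

@[simp]
theorem recipIntegral_zero : recipIntegral w 0 = 0 := by simp [recipIntegral]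

theorem antitoneOn_one_div (hw_pos : ∀ x, 0 ≤ x → 0 < w x) (hw_mono : MonotoneOn w (Ici 0)) :
    AntitoneOn (fun u => 1 / w u) (Ici 0) :=
  fun a ha _ hb hab => one_div_le_one_div_of_le (hw_pos a ha) (hw_mono ha hb hab)

theorem recipIntegral_sub (hw_pos : ∀ x, 0 ≤ x → 0 < w x) (hw_mono : MonotoneOn w (Ici 0))
    {a b : ℝ} (ha : 0 ≤ a) (hb : 0 ≤ b) :
    recipIntegral w b - recipIntegral w a = ∫ u in a..b, 1 / w u := by
  have hint : ∀ x, 0 ≤ x → IntervalIntegrable (fun u => 1 / w u) volume 0 x := fun x hx =>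
    ((antitoneOn_one_div hw_pos hw_mono).mono fun u hu => (uIcc_of_le hx ▸ hu).1).intervalIntegrable
  exact intervalIntegral.integral_interval_sub_left (hint b hb) (hint a ha)

theorem sub_div_le_recipIntegral_sub (hw_pos : ∀ x, 0 ≤ x → 0 < w x)
    (hw_mono : MonotoneOn w (Ici 0)) {a b : ℝ} (ha : 0 ≤ a) (hab : a ≤ b) :
    (b - a) / w b ≤ recipIntegral w b - recipIntegral w a := by
  rw [recipIntegral_sub hw_pos hw_mono ha (ha.trans hab), div_eq_mul_one_div]
  exact AntitoneOn.sub_mul_le_intervalIntegral hab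
    ((antitoneOn_one_div hw_pos hw_mono).mono fun x hx => ha.trans hx.1)

theorem recipIntegral_sub_le_sub_div (hw_pos : ∀ x, 0 ≤ x → 0 < w x)
    (hw_mono : MonotoneOn w (Ici 0)) {a b : ℝ} (ha : 0 ≤ a) (hab : a ≤ b) :
    recipIntegral w b - recipIntegral w a ≤ (b - a) / w a := by
  rw [recipIntegral_sub hw_pos hw_mono ha (ha.trans hab), div_eq_mul_one_div]
  exact AntitoneOn.intervalIntegral_le_sub_mul hab
    ((antitoneOn_one_div hw_pos hw_mono).mono fun x hx => ha.trans hx.1)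

theorem strictMonoOn_recipIntegral (hw_pos : ∀ x, 0 ≤ x → 0 < w x)
    (hw_mono : MonotoneOn w (Ici 0)) : StrictMonoOn (recipIntegral w) (Ici 0) := by
  intro a ha b hb hab
  have hlower := sub_div_le_recipIntegral_sub hw_pos hw_mono ha hab.le
  have hstep : 0 < (b - a) / w b := div_pos (sub_pos.2 hab) (hw_pos b hb)
  linarith

theorem recipIntegral_pos (hw_pos : ∀ x, 0 ≤ x → 0 < w x) (hw_mono : MonotoneOn w (Ici 0))
    {x : ℝ} (hx : 0 < x) : 0 < recipIntegral w x := by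
  simpa using strictMonoOn_recipIntegral hw_pos hw_mono self_mem_Ici hx.le hx

theorem recipIntegral_nonneg (hw_pos : ∀ x, 0 ≤ x → 0 < w x) (hw_mono : MonotoneOn w (Ici 0))
    {x : ℝ} (hx : 0 ≤ x) : 0 ≤ recipIntegral w x := by
  simpa using (strictMonoOn_recipIntegral hw_pos hw_mono).monotoneOn self_mem_Ici hx hx

theorem continuousOn_recipIntegral (hw_pos : ∀ x, 0 ≤ x → 0 < w x)
    (hw_mono : MonotoneOn w (Ici 0)) : ContinuousOn (recipIntegral w) (Ici 0) := by
  refine (LipschitzOnWith.of_le_add_mul' (1 / w 0) fun x hx y hy => ?_).continuousOn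
  rcases le_total x y with hxy | hyx
  · have hle := (strictMonoOn_recipIntegral hw_pos hw_mono).monotoneOn hx hy hxy
    have hK : 0 ≤ 1 / w 0 * dist x y := by have := hw_pos 0 le_rfl; positivity
    linarith
  · have h1 := recipIntegral_sub_le_sub_div hw_pos hw_mono hy hyx
    have h2 : (x - y) / w y ≤ 1 / w 0 * dist x y := by
      rw [Real.dist_eq, abs_of_nonneg (sub_nonneg.2 hyx), div_eq_mul_one_div, mul_comm]
      exact mul_le_mul_of_nonneg_right (antitoneOn_one_div hw_pos hw_mono self_mem_Ici hy hy)
        (sub_nonneg.2 hyx)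
    linarith

variable {ℓ : ℝ → ℝ}

theorem pos_of_eq_div (hw_pos : ∀ x, 0 ≤ x → 0 < w x) (hwl : ∀ x, 0 < x → w x = x / ℓ x)
    {x : ℝ} (hx : 0 < x) : 0 < ℓ x :=
  (div_pos_iff_of_pos_left hx).1 (hwl x hx ▸ hw_pos x hx.le)

theorem half_le_recipIntegral_sub_half (hw_pos : ∀ x, 0 ≤ x → 0 < w x)
    (hw_mono : MonotoneOn w (Ici 0)) (hwl : ∀ x, 0 < x → w x = x / ℓ x) {x : ℝ} (hx : 0 < x) :
    ℓ x / 2 ≤ recipIntegral w x - recipIntegral w (x / 2) := by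
  have h := sub_div_le_recipIntegral_sub hw_pos hw_mono (half_pos hx).le (half_le_self hx.le)
  have hblock : (x - x / 2) / w x = ℓ x / 2 := by rw [hwl x hx]; field_simp; ring
  rwa [hblock] at h

theorem tendsto_recipIntegral_atTop (hw_pos : ∀ x, 0 ≤ x → 0 < w x)
    (hw_mono : MonotoneOn w (Ici 0)) (hwl : ∀ x, 0 < x → w x = x / ℓ x)
    (hl_inf : Tendsto ℓ atTop atTop) : Tendsto (recipIntegral w) atTop atTop := by
  refine tendsto_atTop_mono' atTop ?_ (hl_inf.atTop_div_const two_pos)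
  filter_upwards [eventually_gt_atTop 0] with x hx
  linarith [half_le_recipIntegral_sub_half hw_pos hw_mono hwl hx,
    recipIntegral_nonneg hw_pos hw_mono (half_pos hx).le]

theorem sum_half_le_recipIntegral (hw_pos : ∀ x, 0 ≤ x → 0 < w x)
    (hw_mono : MonotoneOn w (Ici 0)) (hwl : ∀ x, 0 < x → w x = x / ℓ x) {x : ℝ} (hx : 0 < x)
    (k : ℕ) : ∑ j ∈ Finset.range k, ℓ (x / 2 ^ j) / 2 ≤ recipIntegral w x := by
  suffices ∑ j ∈ Finset.range k, ℓ (x / 2 ^ j) / 2 ≤ recipIntegral w x - recipIntegral w (x / 2 ^ k)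
    by linarith [recipIntegral_nonneg hw_pos hw_mono (by positivity : 0 ≤ x / 2 ^ k)]
  induction k with
  | zero => simp
  | succ k ih =>
    have h := half_le_recipIntegral_sub_half hw_pos hw_mono hwl (by positivity : 0 < x / 2 ^ k)
    rw [div_div, ← pow_succ] at h
    rw [Finset.sum_range_succ]
    linarith

theorem tendsto_recipIntegral_div_atTop (hw_pos : ∀ x, 0 ≤ x → 0 < w x)
    (hw_mono : MonotoneOn w (Ici 0)) (hwl : ∀ x, 0 < x → w x = x / ℓ x)
    (hl_slow : SlowlyVarying ℓ) : Tendsto (fun x => recipIntegral w x / ℓ x) atTop atTop := by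
  refine tendsto_atTop.2 fun M => ?_
  set k := ⌈4 * M⌉₊
  have hl_pos : ∀ᶠ x in atTop, 0 < ℓ x := by
    filter_upwards [eventually_gt_atTop 0] with x hx using pos_of_eq_div hw_pos hwl hx
  have hblocks : ∀ᶠ x in atTop, ∀ j ∈ Finset.range k, ℓ x / 4 ≤ ℓ (x / 2 ^ j) / 2 := by
    refine (eventually_all_finset _).2 fun j _ => ?_
    filter_upwards [hl_slow.eventually_mul_le hl_pos (by positivity : (0 : ℝ) < (1 / 2) ^ j)
      (by norm_num : (1 / 2 : ℝ) < 1)] with x hx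
    rw [show (1 / 2 : ℝ) ^ j * x = x / 2 ^ j by rw [one_div_pow, one_div_mul_eq_div]] at hx
    linarith
  filter_upwards [hblocks, hl_pos, eventually_gt_atTop 0] with x hx hlx hx0
  rw [le_div_iff₀ hlx]
  calc M * ℓ x ≤ k * (ℓ x / 4) := by nlinarith [Nat.le_ceil (4 * M)]
    _ = ∑ j ∈ Finset.range k, ℓ x / 4 := by simp
    _ ≤ ∑ j ∈ Finset.range k, ℓ (x / 2 ^ j) / 2 := Finset.sum_le_sum hx
    _ ≤ recipIntegral w x := sum_half_le_recipIntegral hw_pos hw_mono hwl hx0 k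

theorem slowlyVarying_recipIntegral (hw_pos : ∀ x, 0 ≤ x → 0 < w x)
    (hw_mono : MonotoneOn w (Ici 0)) (hwl : ∀ x, 0 < x → w x = x / ℓ x)
    (hl_slow : SlowlyVarying ℓ) : SlowlyVarying (recipIntegral w) := by
  refine SlowlyVarying.of_one_le fun c hc => ?_
  have hratio : Tendsto (fun x => ℓ x / recipIntegral w x) atTop (𝓝 0) :=
    (tendsto_recipIntegral_div_atTop hw_pos hw_mono hwl hl_slow).inv_tendsto_atTop.congr
      fun x => inv_div _ _
  have hupper := (hratio.const_mul (c - 1)).const_add 1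
  rw [mul_zero, add_zero] at hupper
  refine tendsto_of_tendsto_of_tendsto_of_le_of_le' tendsto_const_nhds hupper ?_ ?_
  all_goals filter_upwards [eventually_gt_atTop 0] with x hx
  all_goals have hWx := recipIntegral_pos hw_pos hw_mono hx
  · rw [one_le_div hWx]
    exact (strictMonoOn_recipIntegral hw_pos hw_mono).monotoneOn hx.le (mem_Ici.2 (by positivity))
      (le_mul_of_one_le_left hx.le hc)
  · have h := recipIntegral_sub_le_sub_div hw_pos hw_mono hx.le (le_mul_of_one_le_left hx.le hc)
    have hincr : (c * x - x) / w x = (c - 1) * ℓ x := by rw [hwl x hx]; field_simp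
    rw [hincr] at h
    rw [div_le_iff₀ hWx, add_mul, one_mul, mul_assoc, div_mul_cancel₀ _ hWx.ne']
    linarith

end recipIntegral

theorem nonneg_of_leftInvOn_of_tendsto_atTop {W Winv : ℝ → ℝ} (hcont : ContinuousOn W (Ici 0))
    (htop : Tendsto W atTop atTop) (h0 : W 0 = 0) (hleft : ∀ x, 0 ≤ x → Winv (W x) = x)
    {t : ℝ} (ht : 0 ≤ t) : 0 ≤ Winv t := by
  have ht' : t ∈ Ici (W 0) := by rwa [mem_Ici, h0]
  obtain ⟨x, hx, rfl⟩ := intermediate_value_Ici hcont htop ht'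
  rw [hleft x hx]
  exact hx

theorem MonotoneOn.tendsto_atTop_of_tendsto_comp {W : ℝ → ℝ} (hW : MonotoneOn W (Ici 0))
    {α : Type*} {l : Filter α} {g : α → ℝ} (hg : ∀ᶠ x in l, 0 ≤ g x)
    (hWg : Tendsto (fun x => W (g x)) l atTop) : Tendsto g l atTop := by
  refine tendsto_atTop.2 fun N => ?_
  filter_upwards [hWg.eventually_gt_atTop (W (max N 0)), hg] with x hx hgx
  by_contra! hlt
  exact hx.not_ge (hW hgx (le_max_right N 0) (hlt.le.trans (le_max_left N 0)))

theorem SlowlyVarying.tendsto_inv_div_inv {W Winv : ℝ → ℝ} (hW : SlowlyVarying W)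
    (hmono : StrictMonoOn W (Ici 0)) (hcont : ContinuousOn W (Ici 0)) (h0 : W 0 = 0)
    (htop : Tendsto W atTop atTop) (hleft : ∀ x, 0 ≤ x → Winv (W x) = x)
    (hright : ∀ x, 0 ≤ x → W (Winv x) = x) {η η' lam : ℝ} (hη : 0 < η) (hηη' : η < η')
    (hlam : 0 < lam) :
    Tendsto (fun x => Winv (η * W (lam * x / η)) / Winv (η' * W (x / η'))) atTop (𝓝 0) := by
  have hη' : 0 < η' := hη.trans hηη'
  have hscaled : ∀ c x, 0 < c → 0 ≤ x → 0 ≤ c * W x := fun c x hc hx =>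
    mul_nonneg hc.le (h0 ▸ hmono.monotoneOn self_mem_Ici hx hx)
  have hWinv_nonneg : ∀ c x, 0 < c → 0 ≤ x → 0 ≤ Winv (c * W x) := fun c x hc hx =>
    nonneg_of_leftInvOn_of_tendsto_atTop hcont htop h0 hleft (hscaled c x hc hx)
  have hx' : Tendsto (fun x => x / η') atTop atTop := tendsto_id.atTop_div_const hη'
  have hWg : Tendsto (fun x => W (Winv (η' * W (x / η')))) atTop atTop :=
    ((htop.comp hx').const_mul_atTop hη').congr' <| by
      filter_upwards [eventually_ge_atTop 0] with x hx
      exact (hright _ (hscaled η' _ hη' (by positivity))).symm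
  have hratio := (hW.tendsto_comp (by positivity : 0 < lam * η' / η) hx').const_mul (η / η')
  rw [mul_one] at hratio
  refine hW.tendsto_div_zero hmono (fun x hx => h0 ▸ hmono self_mem_Ici hx.le hx) ?hf
    (hmono.monotoneOn.tendsto_atTop_of_tendsto_comp ?hg hWg) ((div_lt_one hη').2 hηη')
    (hratio.congr' ?hfg)
  case hf =>
    filter_upwards [eventually_ge_atTop 0] with x hx using hWinv_nonneg η _ hη (by positivity)
  case hg =>
    filter_upwards [eventually_ge_atTop 0] with x hx using hWinv_nonneg η' _ hη' (by positivity)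
  case hfg =>
    filter_upwards [eventually_ge_atTop 0] with x hx
    rw [hright _ (hscaled η _ hη (by positivity)), hright _ (hscaled η' _ hη' (by positivity)),
      show lam * η' / η * (x / η') = lam * x / η by field_simp]
    field_simp

theorem Phi_eta_two_comparison_general
(w ℓ W : ℝ → ℝ)
    (hw_pos : ∀ x, 0 ≤ x → 0 < w x)
    (hw_mono : MonotoneOn w (Set.Ici 0))
    (hwl : ∀ x, 0 < x → w x = x / ℓ x)
    (hl_slow : ∀ c, 0 < c → Tendsto (fun x => ℓ (c * x) / ℓ x) atTop (nhds 1))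
    (hl_inf : Tendsto ℓ atTop atTop)
    (hW : ∀ x, W x = ∫ u in (0:ℝ)..x, 1 / w u)
    (Winv : ℝ → ℝ)
    (hWinv_left : ∀ x, 0 ≤ x → Winv (W x) = x)
    (hWinv_right : ∀ x, 0 ≤ x → W (Winv x) = x)
    (η η' lam : ℝ) (hη : 0 < η) (hηη' : η < η') (hlam : 0 < lam) :
    Tendsto (fun x => Winv (η * W (lam * x / η)) / Winv (η' * W (x / η')))
      atTop (nhds 0) := by
  obtain rfl : W = recipIntegral w := funext hW
  exact (slowlyVarying_recipIntegral hw_pos hw_mono hwl hl_slow).tendsto_inv_div_inv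
    (strictMonoOn_recipIntegral hw_pos hw_mono) (continuousOn_recipIntegral hw_pos hw_mono)
    recipIntegral_zero (tendsto_recipIntegral_atTop hw_pos hw_mono hwl hl_inf) hWinv_left
    hWinv_right hη hηη' hlam

/-- For `0 < η < η' < 1` and `λ > 0`, `Φ_{η,2}(λx) = o(Φ_{η',2}(x))` as `x → ∞`,
where `Φ_{η,2}(x) = W⁻¹(η·W(x/η))`. -/
theorem Phi_eta_two_comparison
(w ℓ W : ℝ → ℝ)
    (hw_cont : ContinuousOn w (Set.Ici 0))
    (hw_pos : ∀ x, 0 ≤ x → 0 < w x)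
    (hw_mono : MonotoneOn w (Set.Ici 0))
    (hwl : ∀ x, 0 < x → w x = x / ℓ x)
    (hl_slow : ∀ c, 0 < c → Tendsto (fun x => ℓ (c * x) / ℓ x) atTop (nhds 1))
    (hl_inf : Tendsto ℓ atTop atTop)
    (hW : ∀ x, W x = ∫ u in (0:ℝ)..x, 1 / w u)
    (Winv : ℝ → ℝ)
    (hWinv_left : ∀ x, 0 ≤ x → Winv (W x) = x)
    (hWinv_right : ∀ x, 0 ≤ x → W (Winv x) = x)
    (η η' lam : ℝ) (hη : 0 < η) (hηη' : η < η') (hη'1 : η' < 1) (hlam : 0 < lam) :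
    Tendsto (fun x => Winv (η * W (lam * x / η)) / Winv (η' * W (x / η')))
      atTop (nhds 0) :=
  Phi_eta_two_comparison_general w ℓ W hw_pos hw_mono hwl hl_slow hl_inf hW Winv hWinv_left
    hWinv_right η η' lam hη hηη' hlam
end

section
/- Let w̃ be a weight function with w̃(x) = x·exp(−(log x)/(log log x)) for large x. Then i_−(w̃) = i_+(w̃) = +∞. -/
open Filter MeasureTheory

noncomputable section

/-- Boundedness of a function on `[0,∞)`. -/
def BddOn (f : ℝ → ℝ) : Prop := BddAbove (f '' Set.Ici 0)

/-- The operator `G(f)(x) = ∫₀ˣ w(W⁻¹(f(u)))/w(W⁻¹(u)) du`. -/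
def Gop (w Winv : ℝ → ℝ) (f : ℝ → ℝ) : ℝ → ℝ :=
  fun x => ∫ u in (0:ℝ)..x, w (Winv (f u)) / w (Winv u)

/-- `i_η(w) = inf{n ≥ 2 : G^(n-1)(η·Id) is bounded}`. -/
def iIdx (w Winv : ℝ → ℝ) (η : ℝ) : ℕ∞ :=
  sInf {n : ℕ∞ | ∃ m : ℕ, n = (m : ℕ∞) ∧ 2 ≤ m ∧
    BddOn ((Gop w Winv)^[m-1] (fun x => η * x))}

/-- `i₋(w)`, the left limit of `η ↦ i_η(w)` at `1/2` (by monotonicity, the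
supremum over `η ∈ (0,1/2)`). -/
def iMinus (w Winv : ℝ → ℝ) : ℕ∞ := ⨆ η ∈ Set.Ioo (0:ℝ) (1/2), iIdx w Winv η

/-- `i₊(w)`, the right limit of `η ↦ i_η(w)` at `1/2` (by monotonicity, the
infimum over `η ∈ (1/2,1)`). -/
def iPlus (w Winv : ℝ → ℝ) : ℕ∞ := ⨅ η ∈ Set.Ioo (1/2 : ℝ) 1, iIdx w Winv η

end

/-!
Write `g x = log x / log (log x)`, so that `w x = x e^{-g x}` and `W' x = e^{g x} / x` for large `x`.
Comparison with `F = 4 (log log) e^g`, whose derivative dominates `W'`, gives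
`W x ≤ 5 log log x · e^{g x}`; hence `log W` increases by at least `γ / (5 log log x)` between
`x e^{-γ}` and `x`. Taking `x = W⁻¹ u`, this says that `v ≥ u e^{-β}` forces
`w (W⁻¹ v) ≥ e^{-γ} w (W⁻¹ u)` with `γ = 5 β log log W⁻¹ u ≤ 10 β log log u`, because
`log W⁻¹ u ≤ (log u)²`. So if `f x ≥ x exp (-C (log log x)^k)` then
`G f x ≥ x exp (-(10 C + 1) (log log x)^(k+1))`; starting from `η x`, every iterate of `G` stays
above `√x` for large `x`, hence is unbounded, and `i_η(w) = ∞` for every `η ∈ (0, 1)`.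
-/

open Set Real

noncomputable def logDivLogLog (x : ℝ) : ℝ := log x / log (log x)

lemma le_log_log_of_exp_exp_le {a x : ℝ} (h : exp (exp a) ≤ x) : a ≤ log (log x) := by
  have hx : 0 < x := (exp_pos _).trans_le h
  rw [le_log_iff_exp_le ((exp_pos _).trans_le ((le_log_iff_exp_le hx).2 h)),
    le_log_iff_exp_le hx]
  exact h

lemma hasDerivAt_logDivLogLog {x : ℝ} (hx : log x ≠ 0) (hx' : log (log x) ≠ 0) :
    HasDerivAt logDivLogLog ((log (log x) - 1) / (x * log (log x) ^ 2)) x := by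
  have hx₀ : x ≠ 0 := by rintro rfl; simp at hx
  refine ((hasDerivAt_log hx₀).div ((hasDerivAt_log hx).comp x (hasDerivAt_log hx₀)) hx').congr_deriv
    ?_
  simp only [Function.comp_apply]
  field_simp

lemma monotoneOn_logDivLogLog : MonotoneOn logDivLogLog (Ici (exp (exp 1))) := by
  have hLL : ∀ x ∈ Ici (exp (exp 1)), 1 ≤ log (log x) := fun x hx => le_log_log_of_exp_exp_le hx
  have hderiv : ∀ x ∈ Ici (exp (exp 1)),
      HasDerivAt logDivLogLog ((log (log x) - 1) / (x * log (log x) ^ 2)) x := fun x hx => by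
    have h := hLL x hx
    refine hasDerivAt_logDivLogLog ?_ (by linarith)
    rintro h0
    simp [h0] at h
    linarith
  refine monotoneOn_of_hasDerivWithinAt_nonneg (convex_Ici _)
    (fun x hx => (hderiv x hx).continuousAt.continuousWithinAt)
    (fun x hx => (hderiv x (interior_subset hx)).hasDerivWithinAt) fun x hx => ?_
  have hx := interior_subset hx
  have := hLL x hx
  have : 0 < x := (exp_pos _).trans_le hx
  exact div_nonneg (by linarith) (by positivity)

lemma tendsto_logDivLogLog_atTop : Tendsto logDivLogLog atTop atTop := by
  have hLL : Tendsto (fun x => log (log x)) atTop atTop := tendsto_log_atTop.comp tendsto_log_atTop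
  refine ((tendsto_exp_div_pow_atTop 1).comp hLL).congr' ?_
  filter_upwards [eventually_gt_atTop 1] with x hx
  simp [logDivLogLog, exp_log (log_pos hx)]

lemma eventually_mul_pow_log_log_le (C : ℝ) (k : ℕ) {ε : ℝ} (hε : 0 < ε) :
    ∀ᶠ x in atTop, C * log (log x) ^ k ≤ ε * log x := by
  have hLL : Tendsto (fun x => log (log x)) atTop atTop := tendsto_log_atTop.comp tendsto_log_atTop
  filter_upwards [hLL.eventually (((isLittleO_pow_exp_atTop (n := k)).const_mul_left C).def hε),
    eventually_gt_atTop 1] with x hx hx1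
  rw [norm_eq_abs, norm_eq_abs, abs_exp, exp_log (log_pos hx1)] at hx
  exact (le_abs_self _).trans hx

lemma eventually_five_mul_log_log_mul_exp_le :
    ∀ᶠ x in atTop, 5 * log (log x) * exp (logDivLogLog x) ≤ x := by
  filter_upwards [eventually_mul_pow_log_log_le 1 1 (ε := 1 / 4) (by norm_num),
    tendsto_log_atTop.eventually_ge_atTop (4 * log 5), eventually_ge_atTop (exp (exp 2))]
    with x hLL h5 hx
  have h2 : 2 ≤ log (log x) := le_log_log_of_exp_exp_le hx
  have hx0 : 0 < x := (exp_pos _).trans_le hx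
  have hlog : 0 < log x := (exp_pos _).trans_le ((le_log_iff_exp_le hx0).2 hx)
  have hg : logDivLogLog x ≤ log x / 2 := by
    rw [logDivLogLog, div_le_div_iff₀ (by linarith) two_pos]
    nlinarith
  have hlll : log (log (log x)) ≤ log (log x) := by
    linarith [log_le_sub_one_of_pos (by linarith : 0 < log (log x))]
  calc 5 * log (log x) * exp (logDivLogLog x)
      = exp (log 5 + log (log (log x)) + logDivLogLog x) := by
        rw [exp_add, exp_add, exp_log (by norm_num), exp_log (by linarith)]
    _ ≤ exp (log x) := exp_le_exp.2 (by linarith)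
    _ = x := exp_log hx0

lemma eventually_le_logDivLogLog_exp_sq_div_two :
    ∀ᶠ s in atTop, s ≤ logDivLogLog (exp (s ^ 2 / 2)) := by
  filter_upwards [isLittleO_log_id_atTop.def (c := 1 / 4) (by norm_num),
    eventually_ge_atTop 2] with s hs h2
  rw [norm_eq_abs, norm_eq_abs, id, abs_of_pos (by linarith : 0 < s)] at hs
  have hlog : log (s ^ 2 / 2) ≤ s / 2 := by
    calc log (s ^ 2 / 2) ≤ log (s ^ 2) := log_le_log (by positivity) (by linarith [sq_nonneg s])
      _ = 2 * log s := by rw [log_pow]; norm_num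
      _ ≤ s / 2 := by linarith [le_abs_self (log s)]
  have hpos : 0 < log (s ^ 2 / 2) := log_pos (by nlinarith)
  rw [logDivLogLog, log_exp, le_div_iff₀ hpos]
  nlinarith

section Primitive

variable {w W : ℝ → ℝ}

lemma continuousOn_one_div (hw_cont : ContinuousOn w (Ici 0)) (hw_pos : ∀ x, 0 ≤ x → 0 < w x) :
    ContinuousOn (fun u => 1 / w u) (Ici 0) :=
  continuousOn_const.div hw_cont fun x hx => (hw_pos x hx).ne'

lemma intervalIntegrable_one_div (hw_cont : ContinuousOn w (Ici 0))
    (hw_pos : ∀ x, 0 ≤ x → 0 < w x) {a b : ℝ} (ha : 0 ≤ a) (hb : 0 ≤ b) :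
    IntervalIntegrable (fun u => 1 / w u) volume a b :=
  ((continuousOn_one_div hw_cont hw_pos).mono fun _ hx => (le_min ha hb).trans hx.1)
    |>.intervalIntegrable

lemma strictMonoOn_primitive (hw_cont : ContinuousOn w (Ici 0)) (hw_pos : ∀ x, 0 ≤ x → 0 < w x)
    (hW : ∀ x, W x = ∫ u in (0:ℝ)..x, 1 / w u) : StrictMonoOn W (Ici 0) := by
  intro a ha b hb hab
  have hint := intervalIntegrable_one_div hw_cont hw_pos ha hb
  have hpos : 0 < ∫ u in a..b, 1 / w u := intervalIntegral.intervalIntegral_pos_of_pos_on hint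
    (fun x hx => one_div_pos.2 (hw_pos x (le_trans ha hx.1.le))) hab
  rw [hW, hW, ← intervalIntegral.integral_add_adjacent_intervals
    (intervalIntegrable_one_div hw_cont hw_pos le_rfl ha) hint]
  linarith

lemma hasDerivAt_primitive (hw_cont : ContinuousOn w (Ici 0)) (hw_pos : ∀ x, 0 ≤ x → 0 < w x)
    (hW : ∀ x, W x = ∫ u in (0:ℝ)..x, 1 / w u) {x : ℝ} (hx : 0 < x) :
    HasDerivAt W (1 / w x) x := by
  rw [show W = fun x => ∫ u in (0:ℝ)..x, 1 / w u from funext hW]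
  have hc := continuousOn_one_div hw_cont hw_pos
  exact intervalIntegral.integral_hasDerivAt_right
    (intervalIntegrable_one_div hw_cont hw_pos le_rfl hx.le)
    ((hc.mono Ioi_subset_Ici_self).stronglyMeasurableAtFilter isOpen_Ioi x hx)
    (hc.continuousAt (Ici_mem_nhds hx))

lemma surjOn_primitive (hw_cont : ContinuousOn w (Ici 0)) (hw_pos : ∀ x, 0 ≤ x → 0 < w x)
    (hW : ∀ x, W x = ∫ u in (0:ℝ)..x, 1 / w u) (htop : Tendsto W atTop atTop) :
    SurjOn W (Ici 0) (Ici 0) := by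
  intro u hu
  obtain ⟨b, hub, hb⟩ := ((htop.eventually_ge_atTop u).and (eventually_ge_atTop 0)).exists
  have hc : ContinuousOn W (Icc 0 b) := by
    rw [show W = fun x => ∫ u in (0:ℝ)..x, 1 / w u from funext hW, ← uIcc_of_le hb]
    exact intervalIntegral.continuousOn_primitive_interval'
      (intervalIntegrable_one_div hw_cont hw_pos le_rfl hb) left_mem_uIcc
  obtain ⟨x, hx, rfl⟩ := intermediate_value_Icc hb hc ⟨by simpa [hW] using hu, hub⟩
  exact ⟨x, hx.1, rfl⟩

end Primitive

section RightInverse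

variable {W Winv : ℝ → ℝ}

lemma le_rightInverse_iff (hW : StrictMonoOn W (Ici 0)) (hWinv : ∀ u, 0 ≤ u → 0 ≤ Winv u)
    (hright : ∀ u, 0 ≤ u → W (Winv u) = u) {z u : ℝ} (hz : 0 ≤ z) (hu : 0 ≤ u) :
    z ≤ Winv u ↔ W z ≤ u := by
  conv_rhs => rw [← hright u hu]
  exact (hW.le_iff_le hz (hWinv u hu)).symm

lemma rightInverse_le_iff (hW : StrictMonoOn W (Ici 0)) (hWinv : ∀ u, 0 ≤ u → 0 ≤ Winv u)
    (hright : ∀ u, 0 ≤ u → W (Winv u) = u) {u b : ℝ} (hu : 0 ≤ u) (hb : 0 ≤ b) :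
    Winv u ≤ b ↔ u ≤ W b := by
  conv_rhs => rw [← hright u hu]
  exact (hW.le_iff_le (hWinv u hu) hb).symm

lemma monotoneOn_rightInverse (hW : StrictMonoOn W (Ici 0)) (hWinv : ∀ u, 0 ≤ u → 0 ≤ Winv u)
    (hright : ∀ u, 0 ≤ u → W (Winv u) = u) : MonotoneOn Winv (Ici 0) := fun u hu v hv huv =>
  (rightInverse_le_iff hW hWinv hright hu (hWinv v hv)).2 (by rwa [hright v hv])

end RightInverse

lemma sub_le_sub_of_hasDerivAt_le {f g f' g' : ℝ → ℝ} {a b : ℝ} (hab : a ≤ b)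
    (hf : ∀ x ∈ Icc a b, HasDerivAt f (f' x) x) (hg : ∀ x ∈ Icc a b, HasDerivAt g (g' x) x)
    (hle : ∀ x ∈ Ioo a b, g' x ≤ f' x) : g b - g a ≤ f b - f a := by
  have hmono : MonotoneOn (fun x => f x - g x) (Icc a b) :=
    monotoneOn_of_hasDerivWithinAt_nonneg (convex_Icc a b)
      (fun x hx => ((hf x hx).sub (hg x hx)).continuousAt.continuousWithinAt)
      (fun x hx => ((hf x (interior_subset hx)).sub (hg x (interior_subset hx))).hasDerivWithinAt)
      (fun x hx => sub_nonneg.2 (hle x (by rwa [interior_Icc] at hx)))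
  linarith [hmono (left_mem_Icc.2 hab) (right_mem_Icc.2 hab) hab]

section Tail

variable {W : ℝ → ℝ} {T : ℝ}

lemma add_exp_mul_log_sub_le (hT : exp (exp 1) ≤ T)
    (hW : ∀ x, T ≤ x → HasDerivAt W (exp (logDivLogLog x) / x) x) {r x : ℝ} (hr : T ≤ r)
    (hrx : r ≤ x) : W r + exp (logDivLogLog r) * (log x - log r) ≤ W x := by
  have hr0 : 0 < r := (exp_pos _).trans_le (hT.trans hr)
  have := sub_le_sub_of_hasDerivAt_le hrx (fun t ht => hW t (hr.trans ht.1))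
    (fun t ht => (hasDerivAt_log (hr0.trans_le ht.1).ne').const_mul (exp (logDivLogLog r)))
    fun t ht => ?_
  · linarith
  · rw [← div_eq_mul_inv]
    exact div_le_div_of_nonneg_right (exp_le_exp.2 (monotoneOn_logDivLogLog (hT.trans hr)
      (hT.trans (hr.trans ht.1.le)) ht.1.le)) (hr0.trans ht.1).le

lemma eventually_le_five_mul_log_log_mul_exp (hT : exp (exp 2) ≤ T)
    (hW : ∀ x, T ≤ x → HasDerivAt W (exp (logDivLogLog x) / x) x) :
    ∀ᶠ x in atTop, W x ≤ 5 * log (log x) * exp (logDivLogLog x) := by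
  set F : ℝ → ℝ := fun t => 4 * log (log t) * exp (logDivLogLog t)
  have hF : ∀ t, T ≤ t → HasDerivAt F (4 * ((log t)⁻¹ * t⁻¹) * exp (logDivLogLog t) +
      4 * log (log t) * (exp (logDivLogLog t) *
        ((log (log t) - 1) / (t * log (log t) ^ 2)))) t := fun t ht => by
    have h2 := le_log_log_of_exp_exp_le (hT.trans ht)
    have ht0 : t ≠ 0 := ((exp_pos _).trans_le (hT.trans ht)).ne'
    have hlog : log t ≠ 0 := by rintro h; simp [h] at h2; linarith
    exact (((hasDerivAt_log hlog).comp t (hasDerivAt_log ht0)).const_mul 4).mul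
      (hasDerivAt_logDivLogLog hlog (by linarith)).exp
  have hWF : ∀ x, T ≤ x → W x - W T ≤ F x - F T := fun x hx =>
    sub_le_sub_of_hasDerivAt_le hx (fun t ht => hF t ht.1) (fun t ht => hW t ht.1) fun t ht => by
      have h2 := le_log_log_of_exp_exp_le (hT.trans ht.1.le)
      have ht0 : 0 < t := (exp_pos _).trans_le (hT.trans ht.1.le)
      have hlog : 0 < log t := (exp_pos _).trans_le ((le_log_iff_exp_le ht0).2 (hT.trans ht.1.le))
      have hsplit : 4 * log (log t) * (exp (logDivLogLog t) *
          ((log (log t) - 1) / (t * log (log t) ^ 2))) =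
          exp (logDivLogLog t) / t * (4 * (log (log t) - 1) / log (log t)) := by
        field_simp
      have hfac : 1 ≤ 4 * (log (log t) - 1) / log (log t) := by
        rw [le_div_iff₀ (by linarith)]
        linarith
      rw [hsplit]
      have : 0 ≤ 4 * ((log t)⁻¹ * t⁻¹) * exp (logDivLogLog t) := by positivity
      nlinarith [div_pos (exp_pos (logDivLogLog t)) ht0]
  filter_upwards [eventually_ge_atTop T,
    (tendsto_exp_atTop.comp tendsto_logDivLogLog_atTop).eventually_ge_atTop (W T - F T)]
    with x hx hexp
  have h2 := le_log_log_of_exp_exp_le (hT.trans hx)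
  have := hWF x hx
  simp only [Function.comp_apply, F] at hexp this ⊢
  nlinarith [exp_pos (logDivLogLog x)]

lemma div_le_log_sub_log (hT : exp (exp 2) ≤ T)
    (hW : ∀ x, T ≤ x → HasDerivAt W (exp (logDivLogLog x) / x) x)
    (hWpos : ∀ x, T ≤ x → 0 < W x)
    (hub : ∀ x, T ≤ x → W x ≤ 5 * log (log x) * exp (logDivLogLog x)) {z x : ℝ} (hz : T ≤ z)
    (hzx : z ≤ x) : (log x - log z) / (5 * log (log x)) ≤ log (W x) - log (W z) := by
  have hLL := le_log_log_of_exp_exp_le (hT.trans (hz.trans hzx))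
  rw [sub_div]
  refine sub_le_sub_of_hasDerivAt_le hzx (fun t ht => (hW t (hz.trans ht.1)).log
    (hWpos t (hz.trans ht.1)).ne') (fun t ht => (hasDerivAt_log ?_).div_const _) fun t ht => ?_
  · exact ((exp_pos _).trans_le (hT.trans (hz.trans ht.1))).ne'
  have htT : T ≤ t := hz.trans ht.1.le
  have ht0 : 0 < t := (exp_pos _).trans_le (hT.trans htT)
  have hlog : 0 < log t := (exp_pos _).trans_le ((le_log_iff_exp_le ht0).2 (hT.trans htT))
  have hLLt : log (log t) ≤ log (log x) := log_le_log hlog (log_le_log ht0 ht.2.le)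
  have hWt : W t ≤ 5 * log (log x) * exp (logDivLogLog t) :=
    (hub t htT).trans (by gcongr)
  calc t⁻¹ / (5 * log (log x))
      = exp (logDivLogLog t) / t / (5 * log (log x) * exp (logDivLogLog t)) := by
        field_simp
    _ ≤ exp (logDivLogLog t) / t / W t :=
        div_le_div_of_nonneg_left (by positivity) (hWpos t htT) hWt

lemma tendsto_atTop_of_hasDerivAt_exp_div (hT : exp (exp 1) ≤ T)
    (hW : ∀ x, T ≤ x → HasDerivAt W (exp (logDivLogLog x) / x) x) : Tendsto W atTop atTop := by
  have hlin : Tendsto (fun x => W T + exp (logDivLogLog T) * (log x - log T)) atTop atTop :=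
    tendsto_atTop_add_const_left _ _ <|
      (tendsto_atTop_add_const_right _ _ tendsto_log_atTop).const_mul_atTop (exp_pos _)
  refine tendsto_atTop_mono' _ ?_ hlin
  filter_upwards [eventually_ge_atTop T] with x hx
  exact add_exp_mul_log_sub_le hT hW le_rfl hx

end Tail

structure SlowWeight (w W Winv : ℝ → ℝ) (T : ℝ) : Prop where
  exp_exp_two_le : exp (exp 2) ≤ T
  continuousOn : ContinuousOn w (Ici 0)
  pos : ∀ x, 0 ≤ x → 0 < w x
  monotoneOn : MonotoneOn w (Ici 0)
  eq_of_le : ∀ x, T ≤ x → w x = x * exp (-logDivLogLog x)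
  W_eq : ∀ x, W x = ∫ u in (0:ℝ)..x, 1 / w u
  left_inv : ∀ x, 0 ≤ x → Winv (W x) = x
  right_inv : ∀ u, 0 ≤ u → W (Winv u) = u

namespace SlowWeight

variable {w W Winv : ℝ → ℝ} {T : ℝ}

lemma of_le (h : SlowWeight w W Winv T) {T' : ℝ} (hT : T ≤ T') : SlowWeight w W Winv T' :=
  { h with
    exp_exp_two_le := h.exp_exp_two_le.trans hT
    eq_of_le := fun x hx => h.eq_of_le x (hT.trans hx) }

lemma strictMonoOn_W (h : SlowWeight w W Winv T) : StrictMonoOn W (Ici 0) :=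
  strictMonoOn_primitive h.continuousOn h.pos h.W_eq

lemma W_pos (h : SlowWeight w W Winv T) {x : ℝ} (hx : 0 < x) : 0 < W x := by
  simpa [h.W_eq 0] using h.strictMonoOn_W self_mem_Ici hx.le hx

lemma hasDerivAt_W (h : SlowWeight w W Winv T) {x : ℝ} (hx : T ≤ x) :
    HasDerivAt W (exp (logDivLogLog x) / x) x := by
  have hx0 : 0 < x := (exp_pos _).trans_le (h.exp_exp_two_le.trans hx)
  convert hasDerivAt_primitive h.continuousOn h.pos h.W_eq hx0 using 1
  rw [h.eq_of_le x hx, exp_neg]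
  field_simp

lemma exp_exp_one_le (h : SlowWeight w W Winv T) : exp (exp 1) ≤ T :=
  (exp_le_exp.2 (exp_le_exp.2 one_le_two)).trans h.exp_exp_two_le

lemma rightInverse_nonneg (h : SlowWeight w W Winv T) {u : ℝ} (hu : 0 ≤ u) : 0 ≤ Winv u := by
  obtain ⟨x, hx, rfl⟩ := surjOn_primitive h.continuousOn h.pos h.W_eq
    (tendsto_atTop_of_hasDerivAt_exp_div h.exp_exp_one_le fun x => h.hasDerivAt_W) hu
  rw [h.left_inv x hx]
  exact hx

lemma le_rightInverse_iff (h : SlowWeight w W Winv T) {z u : ℝ} (hz : 0 ≤ z) (hu : 0 ≤ u) :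
    z ≤ Winv u ↔ W z ≤ u :=
  _root_.le_rightInverse_iff h.strictMonoOn_W (fun _ => h.rightInverse_nonneg) h.right_inv hz hu

lemma rightInverse_le_iff (h : SlowWeight w W Winv T) {u b : ℝ} (hu : 0 ≤ u) (hb : 0 ≤ b) :
    Winv u ≤ b ↔ u ≤ W b :=
  _root_.rightInverse_le_iff h.strictMonoOn_W (fun _ => h.rightInverse_nonneg) h.right_inv hu hb

lemma monotoneOn_w_rightInverse (h : SlowWeight w W Winv T) :
    MonotoneOn (fun u => w (Winv u)) (Ici 0) := fun _ hu _ hv huv =>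
  h.monotoneOn (h.rightInverse_nonneg hu) (h.rightInverse_nonneg hv)
    (monotoneOn_rightInverse h.strictMonoOn_W (fun _ => h.rightInverse_nonneg) h.right_inv hu hv huv)

lemma div_le_div_w (h : SlowWeight w W Winv T) {z x : ℝ} (hz : T ≤ z) (hzx : z ≤ x) :
    z / x ≤ w z / w x := by
  have hz0 : 0 < z := (exp_pos _).trans_le (h.exp_exp_two_le.trans hz)
  have hg := monotoneOn_logDivLogLog (h.exp_exp_one_le.trans hz)
    (h.exp_exp_one_le.trans (hz.trans hzx)) hzx
  rw [h.eq_of_le z hz, h.eq_of_le x (hz.trans hzx), mul_div_mul_comm]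
  exact le_mul_of_one_le_right (div_nonneg hz0.le (hz0.trans_le hzx).le)
    ((one_le_div (exp_pos _)).2 (exp_le_exp.2 (neg_le_neg hg)))


lemma eventually_le_rightInverse (h : SlowWeight w W Winv T) : ∀ᶠ u in atTop, u ≤ Winv u := by
  filter_upwards [eventually_le_five_mul_log_log_mul_exp h.exp_exp_two_le fun _ => h.hasDerivAt_W,
    eventually_five_mul_log_log_mul_exp_le, eventually_ge_atTop 0] with u hWu hu hu0
  exact (h.le_rightInverse_iff hu0 hu0).2 (hWu.trans hu)

lemma eventually_log_log_rightInverse_le (h : SlowWeight w W Winv T) :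
    ∀ᶠ u in atTop, log (log (Winv u)) ≤ 2 * log (log u) := by
  have hT0 : 0 < T := (exp_pos _).trans_le h.exp_exp_two_le
  have hlogT : 2 ≤ log T := by
    rw [le_log_iff_exp_le hT0]
    exact (exp_le_exp.2 (by linarith [add_one_le_exp (2 : ℝ)])).trans h.exp_exp_two_le
  filter_upwards [tendsto_log_atTop.eventually eventually_le_logDivLogLog_exp_sq_div_two,
    tendsto_log_atTop.eventually_ge_atTop (log T), h.eventually_le_rightInverse,
    eventually_gt_atTop 0] with u hs hsT hle hu0
  set s := log u
  have hr : T ≤ exp (s ^ 2 / 2) := by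
    rw [← exp_log hT0]
    exact exp_le_exp.2 (by nlinarith)
  have hlow := add_exp_mul_log_sub_le h.exp_exp_one_le (fun _ => h.hasDerivAt_W) hr
    (exp_le_exp.2 (by nlinarith) : exp (s ^ 2 / 2) ≤ exp (s ^ 2))
  rw [log_exp, log_exp] at hlow
  have hu : u ≤ exp (logDivLogLog (exp (s ^ 2 / 2))) := by
    rw [← exp_log hu0]
    exact exp_le_exp.2 hs
  have hgain : exp (logDivLogLog (exp (s ^ 2 / 2))) ≤
      exp (logDivLogLog (exp (s ^ 2 / 2))) * (s ^ 2 - s ^ 2 / 2) :=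
    le_mul_of_one_le_right (exp_pos _).le (by nlinarith)
  have hWx : u ≤ W (exp (s ^ 2)) := by linarith [h.W_pos (exp_pos (s ^ 2 / 2))]
  have hWinv := (h.rightInverse_le_iff hu0.le (exp_pos _).le).2 hWx
  have hu1 : 1 < u := by
    rw [← exp_log hu0]
    exact one_lt_exp_iff.2 (by linarith)
  have hlog : 0 < log (Winv u) := log_pos (hu1.trans_le hle)
  calc log (log (Winv u)) ≤ log (s ^ 2) :=
        log_le_log hlog (by simpa using log_le_log (by linarith) hWinv)
    _ = 2 * log s := by rw [log_pow]; norm_num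

lemma exp_neg_mul_le_w_rightInverse (h : SlowWeight w W Winv T)
    (hub : ∀ x, T ≤ x → W x ≤ 5 * log (log x) * exp (logDivLogLog x)) {x γ v : ℝ}
    (hγ : 0 ≤ γ) (hT : T ≤ x * exp (-γ)) (hv : 0 ≤ v)
    (hWv : W x * exp (-(γ / (5 * log (log x)))) ≤ v) : exp (-γ) * w x ≤ w (Winv v) := by
  set z := x * exp (-γ)
  have hz0 : 0 < z := (exp_pos _).trans_le (h.exp_exp_two_le.trans hT)
  have hx0 : 0 < x := (mul_pos_iff_of_pos_right (exp_pos _)).1 hz0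
  have hzx : z ≤ x := mul_le_of_le_one_right hx0.le (exp_le_one_iff.2 (by linarith))
  have hlog := div_le_log_sub_log h.exp_exp_two_le (fun _ => h.hasDerivAt_W)
    (fun _ hx => h.W_pos ((exp_pos _).trans_le (h.exp_exp_two_le.trans hx))) hub hT hzx
  rw [show log x - log z = γ by rw [log_mul hx0.ne' (exp_pos _).ne', log_exp]; ring] at hlog
  have hWz : W z ≤ v :=
    calc W z = exp (log (W z)) := (exp_log (h.W_pos hz0)).symm
      _ ≤ exp (log (W x) + -(γ / (5 * log (log x)))) := exp_le_exp.2 (by linarith)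
      _ = W x * exp (-(γ / (5 * log (log x)))) := by rw [exp_add, exp_log (h.W_pos hx0)]
      _ ≤ v := hWv
  have hwx := h.pos x hx0.le
  calc exp (-γ) * w x = z / x * w x := by rw [mul_div_cancel_left₀ _ hx0.ne']
    _ ≤ w z / w x * w x := mul_le_mul_of_nonneg_right (h.div_le_div_w hT hzx) hwx.le
    _ = w z := div_mul_cancel₀ _ hwx.ne'
    _ ≤ w (Winv v) := h.monotoneOn hz0.le (h.rightInverse_nonneg hv)
        ((h.le_rightInverse_iff hz0.le hv).2 hWz)

lemma eventually_exp_neg_le_div (h : SlowWeight w W Winv T) {f : ℝ → ℝ} {C : ℝ} {k : ℕ}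
    (hC : 0 ≤ C) (hf0 : ∀ u, 0 ≤ u → 0 ≤ f u)
    (hf : ∀ᶠ u in atTop, u * exp (-(C * log (log u) ^ k)) ≤ f u) :
    ∀ᶠ u in atTop, exp (-(10 * C * log (log u) ^ (k + 1))) ≤ w (Winv (f u)) / w (Winv u) := by
  obtain ⟨T₂, hT₂⟩ := eventually_atTop.1
    (eventually_le_five_mul_log_log_mul_exp h.exp_exp_two_le fun _ => h.hasDerivAt_W)
  have h' := h.of_le (le_max_left T T₂)
  have hT'0 : 0 < max T T₂ := (exp_pos _).trans_le h'.exp_exp_two_le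
  filter_upwards [hf, h.eventually_le_rightInverse, h.eventually_log_log_rightInverse_le,
    eventually_mul_pow_log_log_le (10 * C) (k + 1) (ε := 1 / 2) (by norm_num),
    tendsto_log_atTop.eventually_ge_atTop (2 * log (max T T₂)), eventually_ge_atTop (max T T₂)]
    with u hfu hle hLL hsmall hlogu huT
  have hu0 : 0 < u := hT'0.trans_le huT
  have hLLu : 2 ≤ log (log u) := le_log_log_of_exp_exp_le (h'.exp_exp_two_le.trans huT)
  have hLLx : 2 ≤ log (log (Winv u)) :=
    le_log_log_of_exp_exp_le (h'.exp_exp_two_le.trans (huT.trans hle))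
  set β := C * log (log u) ^ k
  set γ := 5 * β * log (log (Winv u))
  have hβ : 0 ≤ β := by positivity
  have hγ : γ ≤ 10 * C * log (log u) ^ (k + 1) :=
    calc γ ≤ 5 * β * (2 * log (log u)) := mul_le_mul_of_nonneg_left hLL (by positivity)
      _ = 10 * C * log (log u) ^ (k + 1) := by ring
  have hT' : max T T₂ ≤ Winv u * exp (-γ) := by
    rw [← exp_log hT'0, ← exp_log (hu0.trans_le hle), ← exp_add]
    exact exp_le_exp.2 (by linarith [log_le_log hu0 hle])
  have hWv : W (Winv u) * exp (-(γ / (5 * log (log (Winv u))))) ≤ f u := by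
    have hγβ : γ / (5 * log (log (Winv u))) = β := by
      simp only [γ]
      field_simp
    rwa [h.right_inv u hu0.le, hγβ]
  have hkey := h'.exp_neg_mul_le_w_rightInverse (fun x hx => hT₂ x (le_of_max_le_right hx))
    (by positivity) hT' (hf0 u hu0.le) hWv
  have hwx := h.pos _ (h.rightInverse_nonneg hu0.le)
  rw [le_div_iff₀ hwx]
  exact (mul_le_mul_of_nonneg_right (exp_le_exp.2 (neg_le_neg hγ)) hwx.le).trans hkey

end SlowWeight

def MonotoneBelowId (f : ℝ → ℝ) : Prop :=
  MonotoneOn f (Ici 0) ∧ ∀ u, 0 ≤ u → 0 ≤ f u ∧ f u ≤ u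

def GrowsAlmostLinearly (k : ℕ) (f : ℝ → ℝ) : Prop :=
  ∃ C, 0 ≤ C ∧ ∀ᶠ x in atTop, x * exp (-(C * log (log x) ^ k)) ≤ f x

lemma growsAlmostLinearly_const_mul {η : ℝ} (hη : 0 < η) :
    GrowsAlmostLinearly 1 (fun x => η * x) := by
  refine ⟨|log η|, abs_nonneg _, ?_⟩
  filter_upwards [eventually_ge_atTop (exp (exp 1))] with x hx
  have hLL := le_log_log_of_exp_exp_le hx
  have hexp : exp (-(|log η| * log (log x) ^ 1)) ≤ η :=
    calc exp (-(|log η| * log (log x) ^ 1)) ≤ exp (log η) :=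
          exp_le_exp.2 (by nlinarith [neg_abs_le (log η), abs_nonneg (log η)])
      _ = η := exp_log hη
  nlinarith [(exp_pos _).trans_le hx]

lemma not_bddOn_of_growsAlmostLinearly {k : ℕ} {f : ℝ → ℝ} (hf : GrowsAlmostLinearly k f) :
    ¬ BddOn f := by
  rintro ⟨M, hM⟩
  obtain ⟨C, -, hC⟩ := hf
  obtain ⟨x, hfx, hsmall, hx, hxM⟩ := (hC.and
    ((eventually_mul_pow_log_log_le C k (ε := 1 / 2) (by norm_num)).and ((eventually_gt_atTop 0).and
      ((tendsto_exp_atTop.comp (tendsto_log_atTop.atTop_div_const two_pos)).eventually_gt_atTop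
        M)))).exists
  have hsqrt : exp (log x / 2) ≤ x * exp (-(C * log (log x) ^ k)) :=
    calc exp (log x / 2) = exp (log x) * exp (-(1 / 2 * log x)) := by rw [← exp_add]; ring_nf
      _ ≤ x * exp (-(C * log (log x) ^ k)) := by
        rw [exp_log hx]
        exact mul_le_mul_of_nonneg_left (exp_le_exp.2 (by linarith)) hx.le
  simp only [Function.comp_apply] at hxM
  linarith [hM ⟨x, mem_Ici.2 hx.le, rfl⟩]

lemma sub_mul_le_integral {h : ℝ → ℝ} {U x c : ℝ} (hU : 0 ≤ U) (hUx : U ≤ x)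
    (hint : IntervalIntegrable h volume 0 x) (h0 : ∀ u ∈ Icc 0 U, 0 ≤ h u)
    (hc : ∀ u ∈ Icc U x, c ≤ h u) : (x - U) * c ≤ ∫ u in (0:ℝ)..x, h u := by
  have hUmem : U ∈ uIcc 0 x := mem_uIcc_of_le hU hUx
  rw [← intervalIntegral.integral_add_adjacent_intervals
    (hint.mono_set (uIcc_subset_uIcc left_mem_uIcc hUmem))
    (hint.mono_set (uIcc_subset_uIcc hUmem right_mem_uIcc))]
  have hleft := intervalIntegral.integral_nonneg (μ := volume) hU h0
  have hright := intervalIntegral.integral_mono_on hUx intervalIntegrable_const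
    (hint.mono_set (uIcc_subset_uIcc hUmem right_mem_uIcc)) hc
  rw [intervalIntegral.integral_const, smul_eq_mul] at hright
  linarith

section Gop

variable {w Winv f : ℝ → ℝ}

lemma div_mem_Icc_of_monotoneBelowId (hpos : ∀ u, 0 ≤ u → 0 < w (Winv u))
    (hmono : MonotoneOn (fun u => w (Winv u)) (Ici 0)) (hf : MonotoneBelowId f) {u : ℝ}
    (hu : 0 ≤ u) : w (Winv (f u)) / w (Winv u) ∈ Icc 0 1 :=
  ⟨div_nonneg (hpos _ (hf.2 u hu).1).le (hpos u hu).le,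
    (div_le_one (hpos u hu)).2 (hmono (hf.2 u hu).1 hu (hf.2 u hu).2)⟩

lemma intervalIntegrable_div_of_monotoneBelowId (hpos : ∀ u, 0 ≤ u → 0 < w (Winv u))
    (hmono : MonotoneOn (fun u => w (Winv u)) (Ici 0)) (hf : MonotoneBelowId f) {a b : ℝ}
    (ha : 0 ≤ a) (hab : a ≤ b) :
    IntervalIntegrable (fun u => w (Winv (f u)) / w (Winv u)) volume a b := by
  rw [intervalIntegrable_iff_integrableOn_Ioc_of_le hab]
  have hsub : Ioc a b ⊆ Ici 0 := fun u hu => ha.trans hu.1.le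
  have hnum : AEMeasurable (fun u => w (Winv (f u))) (volume.restrict (Ioc a b)) :=
    aemeasurable_restrict_of_monotoneOn measurableSet_Ioc
      ((hmono.comp hf.1 fun u hu => (hf.2 u hu).1).mono hsub)
  have hden : AEMeasurable (fun u => w (Winv u)) (volume.restrict (Ioc a b)) :=
    aemeasurable_restrict_of_monotoneOn measurableSet_Ioc (hmono.mono hsub)
  refine Integrable.mono' (integrableOn_const (C := (1:ℝ)) measure_Ioc_lt_top.ne)
    (hnum.div hden).aestronglyMeasurable ?_
  filter_upwards [ae_restrict_mem measurableSet_Ioc] with u hu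
  have := div_mem_Icc_of_monotoneBelowId hpos hmono hf (hsub hu)
  rw [norm_of_nonneg this.1]
  exact this.2

lemma monotoneBelowId_Gop (hpos : ∀ u, 0 ≤ u → 0 < w (Winv u))
    (hmono : MonotoneOn (fun u => w (Winv u)) (Ici 0)) (hf : MonotoneBelowId f) :
    MonotoneBelowId (Gop w Winv f) := by
  have hI : ∀ {a b : ℝ}, 0 ≤ a → a ≤ b →
      IntervalIntegrable (fun u => w (Winv (f u)) / w (Winv u)) volume a b :=
    intervalIntegrable_div_of_monotoneBelowId hpos hmono hf
  have hbd := fun u (hu : 0 ≤ u) => div_mem_Icc_of_monotoneBelowId hpos hmono hf hu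
  refine ⟨fun a ha b hb hab => ?_, fun u hu => ⟨?_, ?_⟩⟩
  · simp only [Gop]
    rw [← intervalIntegral.integral_add_adjacent_intervals (hI le_rfl ha) (hI ha hab)]
    linarith [intervalIntegral.integral_nonneg (μ := volume) hab fun u hu => (hbd u (le_trans ha hu.1)).1]
  · exact intervalIntegral.integral_nonneg hu fun v hv => (hbd v hv.1).1
  · calc Gop w Winv f u ≤ ∫ _ in (0:ℝ)..u, (1:ℝ) :=
          intervalIntegral.integral_mono_on hu (hI le_rfl hu) intervalIntegrable_const
            fun v hv => (hbd v hv.1).2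
      _ = u := by simp

lemma monotoneBelowId_iterate_Gop (hpos : ∀ u, 0 ≤ u → 0 < w (Winv u))
    (hmono : MonotoneOn (fun u => w (Winv u)) (Ici 0)) {η : ℝ} (hη0 : 0 ≤ η) (hη1 : η ≤ 1)
    (m : ℕ) : MonotoneBelowId ((Gop w Winv)^[m] (fun x => η * x)) := by
  induction m with
  | zero =>
    exact ⟨fun a _ b _ hab => mul_le_mul_of_nonneg_left hab hη0,
      fun u hu => ⟨mul_nonneg hη0 hu, mul_le_of_le_one_left hu hη1⟩⟩
  | succ m ih =>
    rw [Function.iterate_succ_apply']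
    exact monotoneBelowId_Gop hpos hmono ih

lemma growsAlmostLinearly_Gop (hpos : ∀ u, 0 ≤ u → 0 < w (Winv u))
    (hmono : MonotoneOn (fun u => w (Winv u)) (Ici 0)) (hf : MonotoneBelowId f) {k : ℕ} {c : ℝ}
    (hc : 0 ≤ c)
    (hρ : ∀ᶠ u in atTop, exp (-(c * log (log u) ^ (k + 1))) ≤ w (Winv (f u)) / w (Winv u)) :
    GrowsAlmostLinearly (k + 1) (Gop w Winv f) := by
  obtain ⟨U, hU⟩ := eventually_atTop.1 hρ
  set U' := max U (exp (exp 1))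
  have hU'0 : 0 ≤ U' := (exp_pos _).le.trans (le_max_right _ _)
  refine ⟨c + 1, by linarith, ?_⟩
  filter_upwards [eventually_ge_atTop (2 * U')] with x hx
  have hU'x : U' ≤ x := by linarith
  have hLLx : 1 ≤ log (log x) := le_log_log_of_exp_exp_le ((le_max_right _ _).trans hU'x)
  set a := log (log x) ^ (k + 1)
  have ha : 1 ≤ a := one_le_pow₀ hLLx
  have hbd := fun u (hu : 0 ≤ u) => div_mem_Icc_of_monotoneBelowId hpos hmono hf hu
  have hint := sub_mul_le_integral (c := exp (-(c * a))) hU'0 hU'x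
    (intervalIntegrable_div_of_monotoneBelowId hpos hmono hf le_rfl (hU'0.trans hU'x))
    (fun u hu => (hbd u hu.1).1) fun u hu => ?_
  · have hexp : exp (-a) ≤ 1 / 2 := by
      rw [exp_neg, inv_eq_one_div]
      exact one_div_le_one_div_of_le two_pos (by linarith [add_one_le_exp a])
    calc x * exp (-((c + 1) * a)) = x * exp (-a) * exp (-(c * a)) := by
          rw [mul_assoc, ← exp_add]; ring_nf
      _ ≤ (x - U') * exp (-(c * a)) := by
          gcongr
          nlinarith [(exp_pos (-a)).le]
      _ ≤ Gop w Winv f x := hint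
  · have hu0 : 0 < u := (exp_pos _).trans_le ((le_max_right _ _).trans hu.1)
    have hLLu : 1 ≤ log (log u) := le_log_log_of_exp_exp_le ((le_max_right _ _).trans hu.1)
    have hlogu : 0 < log u :=
      (exp_pos 1).trans_le ((le_log_iff_exp_le hu0).2 ((le_max_right _ _).trans hu.1))
    refine le_trans (exp_le_exp.2 (neg_le_neg ?_)) (hU u ((le_max_left _ _).trans hu.1))
    exact mul_le_mul_of_nonneg_left (pow_le_pow_left₀ (by linarith)
      (log_le_log hlogu (log_le_log hu0 hu.2)) _) hc

end Gop

lemma iIdx_eq_top {w Winv : ℝ → ℝ} {η : ℝ}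
    (h : ∀ m, ¬ BddOn ((Gop w Winv)^[m] (fun x => η * x))) : iIdx w Winv η = ⊤ := by
  rw [iIdx, sInf_eq_top]
  rintro n ⟨m, rfl, -, hm⟩
  exact absurd hm (h _)

lemma SlowWeight.growsAlmostLinearly_iterate {w W Winv : ℝ → ℝ} {T : ℝ}
    (h : SlowWeight w W Winv T) {η : ℝ} (hη0 : 0 < η) (hη1 : η ≤ 1) (m : ℕ) :
    GrowsAlmostLinearly (m + 1) ((Gop w Winv)^[m] (fun x => η * x)) := by
  have hpos : ∀ u, 0 ≤ u → 0 < w (Winv u) := fun u hu => h.pos _ (h.rightInverse_nonneg hu)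
  induction m with
  | zero => exact growsAlmostLinearly_const_mul hη0
  | succ m ih =>
    obtain ⟨C, hC, hCf⟩ := ih
    have hf := monotoneBelowId_iterate_Gop hpos h.monotoneOn_w_rightInverse hη0.le hη1 m
    rw [Function.iterate_succ_apply']
    exact growsAlmostLinearly_Gop hpos h.monotoneOn_w_rightInverse hf (by positivity)
      (h.eventually_exp_neg_le_div hC (fun u hu => (hf.2 u hu).1) hCf)

theorem iPlusMinus_infinite_of_slow_weight_general
(w W : ℝ → ℝ)
    (hw_cont : ContinuousOn w (Set.Ici 0))
    (hw_pos : ∀ x, 0 ≤ x → 0 < w x)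
    (hw_mono : MonotoneOn w (Set.Ici 0))
    (hW : ∀ x, W x = ∫ u in (0:ℝ)..x, 1 / w u)
    (Winv : ℝ → ℝ)
    (hWinv_left : ∀ x, 0 ≤ x → Winv (W x) = x)
    (hWinv_right : ∀ x, 0 ≤ x → W (Winv x) = x)
    (hw_eq : ∃ x₀ : ℝ, ∀ x : ℝ, x₀ ≤ x →
      w x = x * Real.exp (-(Real.log x / Real.log (Real.log x)))) :
    iMinus w Winv = (⊤ : ℕ∞) ∧ iPlus w Winv = (⊤ : ℕ∞) := by
  obtain ⟨x₀, hx₀⟩ := hw_eq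
  have h : SlowWeight w W Winv (max x₀ (exp (exp 2))) :=
    ⟨le_max_right _ _, hw_cont, hw_pos, hw_mono, fun x hx => hx₀ x (le_of_max_le_left hx), hW,
      hWinv_left, hWinv_right⟩
  have htop : ∀ η ∈ Ioo (0 : ℝ) 1, iIdx w Winv η = ⊤ := fun η hη =>
    iIdx_eq_top fun m => not_bddOn_of_growsAlmostLinearly
      (h.growsAlmostLinearly_iterate hη.1 hη.2.le m)
  refine ⟨eq_top_iff.2 ?_, eq_top_iff.2 (le_iInf₂ fun η hη => ?_)⟩
  · exact (htop (1 / 4) (by norm_num)).ge.trans (le_biSup _ (by norm_num : (1 / 4 : ℝ) ∈ _))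
  · exact (htop η ⟨by linarith [hη.1], hη.2⟩).ge

/-- For the weight `w̃(x) = x·exp(−log x / log log x)` (for large `x`), both critical
indexes are infinite: `i₋(w̃) = i₊(w̃) = +∞`. -/
theorem iPlusMinus_infinite_of_slow_weight
(w ℓ W : ℝ → ℝ)
    (hw_cont : ContinuousOn w (Set.Ici 0))
    (hw_pos : ∀ x, 0 ≤ x → 0 < w x)
    (hw_mono : MonotoneOn w (Set.Ici 0))
    (hwl : ∀ x, 0 < x → w x = x / ℓ x)
    (hl_slow : ∀ c, 0 < c → Tendsto (fun x => ℓ (c * x) / ℓ x) atTop (nhds 1))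
    (hl_inf : Tendsto ℓ atTop atTop)
    (hW : ∀ x, W x = ∫ u in (0:ℝ)..x, 1 / w u)
    (Winv : ℝ → ℝ)
    (hWinv_left : ∀ x, 0 ≤ x → Winv (W x) = x)
    (hWinv_right : ∀ x, 0 ≤ x → W (Winv x) = x)
    (hw_eq : ∃ x₀ : ℝ, ∀ x : ℝ, x₀ ≤ x →
      w x = x * Real.exp (-(Real.log x / Real.log (Real.log x)))) :
    iMinus w Winv = (⊤ : ℕ∞) ∧ iPlus w Winv = (⊤ : ℕ∞) :=
  iPlusMinus_infinite_of_slow_weight_general w W hw_cont hw_pos hw_mono hW Winv hWinv_left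
    hWinv_right hw_eq
end
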